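/- arXiv:2604.18294 — 4 statements merged into one kernel-verified Lean document; each statement's English description precedes it below -/
import Mathlib

section
/- Let w = (p,q) be an extended exterior (K,K′,α₀)-quasiconformal mapping in ℝ² ∖ B̄₁(0), and let p̃(x) = p(x/|x|²) and q̃(x) = q(x/|x|²) be the Kelvin transforms of p and q. Then the mapping w̃ = (q̃, p̃) satisfies, for all x ∈ B₁(0) ∖ {0}, the inequality p̃₁² + p̃₂² + q̃₁² + q̃₂² ≤ 2K(p̃₂q̃₁ − p̃₁q̃₂) + K′|x|^{−2(2−α₀)}, i.e. w̃ is (K,K′)-quasiconformal with singularity exponent λ₀ = 2 − α₀ in B₁(0) ∖ {0}. -/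
open Real Filter Set Metric Bornology

noncomputable section

/-- The `i`-th partial derivative of `p` at `x`, taken within the set `s`. -/
def pd (s : Set (EuclideanSpace ℝ (Fin 2))) (p : EuclideanSpace ℝ (Fin 2) → ℝ)
    (i : Fin 2) (x : EuclideanSpace ℝ (Fin 2)) : ℝ :=
  fderivWithin ℝ p s x (EuclideanSpace.single i 1)

/-- `w = (p,q)` is an extended exterior `(K,K′,α₀)`-quasiconformal mapping on `s`. -/
def ExtQC (K K' α₀ : ℝ) (s : Set (EuclideanSpace ℝ (Fin 2)))
    (p q : EuclideanSpace ℝ (Fin 2) → ℝ) : Prop :=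
  ContDiffOn ℝ 1 p s ∧ ContDiffOn ℝ 1 q s ∧
    ∀ x ∈ s,
      pd s p 0 x ^ 2 + pd s p 1 x ^ 2 + pd s q 0 x ^ 2 + pd s q 1 x ^ 2
        ≤ 2 * K * (pd s p 0 x * pd s q 1 x - pd s p 1 x * pd s q 0 x)
          + K' * ‖x‖ ^ (-(2 * α₀))

/-- The Kelvin transform `p̃(x) = p(x/|x|²)`. -/
def kelvin (p : EuclideanSpace ℝ (Fin 2) → ℝ) (x : EuclideanSpace ℝ (Fin 2)) : ℝ :=
  p ((‖x‖ ^ 2)⁻¹ • x)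

/-- Auxiliary abbreviation for the plane. -/
abbrev EE := EuclideanSpace ℝ (Fin 2)

open ContinuousLinearMap in
/-- Evaluation of the derivative of the inversion map on basis vectors. -/
lemma kelvin_deriv_single (x : EE) (i : Fin 2) :
    ((‖x‖^2)⁻¹ • ContinuousLinearMap.id ℝ EE +
      (((smulRight (1 : ℝ →L[ℝ] ℝ) (-((‖x‖^2) ^ 2)⁻¹)).comp
        (2 • (innerSL ℝ x).comp (ContinuousLinearMap.id ℝ EE))).smulRight x) : EE →L[ℝ] EE)
      (EuclideanSpace.single i 1) =
    (‖x‖^2)⁻¹ • EuclideanSpace.single i 1 + (2 * x i * (-((‖x‖^2)^2)⁻¹)) • x := by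
  simp [EuclideanSpace.inner_single_right, real_inner_comm]
  congr 1
  fin_cases i <;> simp <;> ring

set_option maxHeartbeats 1600000 in
/-- the Kelvin transform of an extended exterior `(K,K′,α₀)`-quasiconformal
mapping is `(K,K′)`-quasiconformal with singularity exponent `λ₀ = 2 − α₀` on the
punctured unit ball. -/
theorem stmt4
    (K K' α₀ : ℝ) (hK : 1 ≤ K) (hK' : 0 ≤ K') (hα₀ : 1 < α₀)
    (p q : EuclideanSpace ℝ (Fin 2) → ℝ)
    (hqc : ExtQC K K' α₀ {x : EuclideanSpace ℝ (Fin 2) | 1 < ‖x‖} p q) :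
    ∀ x : EuclideanSpace ℝ (Fin 2), x ≠ 0 → ‖x‖ < 1 →
      pd (Metric.ball 0 1 \ {0}) (kelvin p) 0 x ^ 2
        + pd (Metric.ball 0 1 \ {0}) (kelvin p) 1 x ^ 2
        + pd (Metric.ball 0 1 \ {0}) (kelvin q) 0 x ^ 2
        + pd (Metric.ball 0 1 \ {0}) (kelvin q) 1 x ^ 2
      ≤ 2 * K * (pd (Metric.ball 0 1 \ {0}) (kelvin p) 1 x
                    * pd (Metric.ball 0 1 \ {0}) (kelvin q) 0 x
                 - pd (Metric.ball 0 1 \ {0}) (kelvin p) 0 x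
                    * pd (Metric.ball 0 1 \ {0}) (kelvin q) 1 x)
        + K' * ‖x‖ ^ (-(2 * (2 - α₀))) := by
  intro x hx0 hxlt
  open ContinuousLinearMap in
  have hxn : (0:ℝ) < ‖x‖ := norm_pos_iff.mpr hx0
  have hr2pos : (0:ℝ) < ‖x‖ ^ 2 := by positivity
  have hr2 : (‖x‖^2 : ℝ) ≠ 0 := ne_of_gt hr2pos
  set y : EE := (‖x‖ ^ 2)⁻¹ • x with hy
  have hyn : ‖y‖ = ‖x‖⁻¹ := by
    rw [hy, norm_smul, norm_inv, norm_pow, norm_norm, sq]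
    field_simp
  have hymem : y ∈ {x : EE | 1 < ‖x‖} := by
    simp only [mem_setOf_eq, hyn]
    exact (one_lt_inv₀ hxn).mpr hxlt
  have hsO : IsOpen (Metric.ball (0:EE) 1 \ {0}) := isOpen_ball.sdiff isClosed_singleton
  have hxmem : x ∈ Metric.ball (0:EE) 1 \ {0} := by
    refine ⟨mem_ball_zero_iff.mpr hxlt, ?_⟩; simpa using hx0
  have hsO' : IsOpen {x : EE | 1 < ‖x‖} := isOpen_lt continuous_const continuous_norm
  have hpd : DifferentiableAt ℝ p y :=
    ((hqc.1.differentiableOn one_ne_zero).differentiableAt (hsO'.mem_nhds hymem))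
  have hqd : DifferentiableAt ℝ q y :=
    ((hqc.2.1.differentiableOn one_ne_zero).differentiableAt (hsO'.mem_nhds hymem))
  set A : EE →L[ℝ] EE :=
    (‖x‖^2)⁻¹ • ContinuousLinearMap.id ℝ EE +
      (((ContinuousLinearMap.smulRight (1 : ℝ →L[ℝ] ℝ) (-((‖x‖^2) ^ 2)⁻¹)).comp
        (2 • (innerSL ℝ x).comp (ContinuousLinearMap.id ℝ EE))).smulRight x) with hA
  have hT : HasFDerivAt (fun z : EE => (‖z‖ ^ 2)⁻¹ • z) A x := by
    have hn : HasFDerivAt (fun z : EE => (‖z‖^2 : ℝ))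
        (2 • (innerSL ℝ x).comp (ContinuousLinearMap.id ℝ EE)) x :=
      (hasFDerivAt_id x).norm_sq
    exact ((hasFDerivAt_inv hr2).comp x hn).smul (hasFDerivAt_id x)
  have hkp : HasFDerivAt (kelvin p) ((fderiv ℝ p y).comp A) x :=
    (hpd.hasFDerivAt.comp x hT : HasFDerivAt (fun z : EE => p ((‖z‖^2)⁻¹ • z)) _ x)
  have hkq : HasFDerivAt (kelvin q) ((fderiv ℝ q y).comp A) x :=
    (hqd.hasFDerivAt.comp x hT : HasFDerivAt (fun z : EE => q ((‖z‖^2)⁻¹ • z)) _ x)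
  have hxdec : x = x 0 • EuclideanSpace.single 0 1 + x 1 • EuclideanSpace.single 1 1 := by
    ext i; fin_cases i <;> simp [EuclideanSpace.single_apply]
  -- evaluation of the composed derivative on basis vectors
  have happ : ∀ (L : EE →L[ℝ] ℝ) (i : Fin 2),
      L (A (EuclideanSpace.single i 1)) =
        (‖x‖^2)⁻¹ * L (EuclideanSpace.single i 1)
        + 2 * x i * (-((‖x‖^2)^2)⁻¹) *
            (x 0 * L (EuclideanSpace.single 0 1) + x 1 * L (EuclideanSpace.single 1 1)) := by
    intro L i
    have hLx : L x = x 0 * L (EuclideanSpace.single 0 1) + x 1 * L (EuclideanSpace.single 1 1) := by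
      conv_lhs => rw [hxdec]
      rw [map_add, map_smul, map_smul, smul_eq_mul, smul_eq_mul]
    rw [hA, kelvin_deriv_single x i, map_add, map_smul, map_smul, smul_eq_mul, smul_eq_mul, hLx]
  set P : Fin 2 → ℝ := fun i => fderiv ℝ p y (EuclideanSpace.single i 1) with hP
  set Q : Fin 2 → ℝ := fun i => fderiv ℝ q y (EuclideanSpace.single i 1) with hQ
  have hpdp : ∀ i, pd (Metric.ball 0 1 \ {0}) (kelvin p) i x =
      (‖x‖^2)⁻¹ * P i + 2 * x i * (-((‖x‖^2)^2)⁻¹) * (x 0 * P 0 + x 1 * P 1) := by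
    intro i
    unfold pd
    rw [fderivWithin_of_isOpen hsO hxmem, hkp.fderiv, ContinuousLinearMap.comp_apply]
    exact happ _ i
  have hpdq : ∀ i, pd (Metric.ball 0 1 \ {0}) (kelvin q) i x =
      (‖x‖^2)⁻¹ * Q i + 2 * x i * (-((‖x‖^2)^2)⁻¹) * (x 0 * Q 0 + x 1 * Q 1) := by
    intro i
    unfold pd
    rw [fderivWithin_of_isOpen hsO hxmem, hkq.fderiv, ContinuousLinearMap.comp_apply]
    exact happ _ i
  -- the hypothesis at y
  have key := hqc.2.2 y hymem
  have hpdPy : ∀ i, pd {x : EE | 1 < ‖x‖} p i y = P i := by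
    intro i; unfold pd; rw [fderivWithin_of_isOpen hsO' hymem]
  have hpdQy : ∀ i, pd {x : EE | 1 < ‖x‖} q i y = Q i := by
    intro i; unfold pd; rw [fderivWithin_of_isOpen hsO' hymem]
  simp only [hpdPy, hpdQy] at key
  -- rpow manipulations
  have hys : ‖y‖ ^ (-(2*α₀)) = ‖x‖ ^ (2*α₀) := by
    rw [hyn, Real.inv_rpow hxn.le, ← Real.rpow_neg hxn.le, neg_neg]
  rw [hys] at key
  have hexp : ‖x‖ ^ (-(2 * (2 - α₀))) = ‖x‖ ^ (2*α₀) * ((‖x‖^2)^2)⁻¹ := by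
    have h4 : ‖x‖ ^ (-(4:ℝ)) = ((‖x‖^2)^2)⁻¹ := by
      rw [Real.rpow_neg hxn.le]
      congr 1
      rw [show ((4:ℝ)) = ((4:ℕ):ℝ) by norm_num, Real.rpow_natCast]
      ring
    rw [show -(2 * (2 - α₀)) = 2*α₀ + (-(4:ℝ)) by ring, Real.rpow_add hxn, h4]
  rw [hexp]
  -- now pure algebra
  have hab : x 0 ^ 2 + x 1 ^ 2 = ‖x‖ ^ 2 := by
    rw [EuclideanSpace.norm_eq, Real.sq_sqrt (by positivity)]
    simp [Fin.sum_univ_two, Real.norm_eq_abs, sq_abs]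
  simp only [hpdp, hpdq]
  set a := x 0
  set b := x 1
  set r : ℝ := ‖x‖^2 with hr
  have habne : a^2 + b^2 ≠ 0 := hab ▸ hr2
  have e1 :
      ((r)⁻¹ * P 0 + 2 * a * (-(r^2)⁻¹) * (a * P 0 + b * P 1)) ^ 2
      + ((r)⁻¹ * P 1 + 2 * b * (-(r^2)⁻¹) * (a * P 0 + b * P 1)) ^ 2
      + ((r)⁻¹ * Q 0 + 2 * a * (-(r^2)⁻¹) * (a * Q 0 + b * Q 1)) ^ 2
      + ((r)⁻¹ * Q 1 + 2 * b * (-(r^2)⁻¹) * (a * Q 0 + b * Q 1)) ^ 2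
      = (r^2)⁻¹ * (P 0 ^ 2 + P 1 ^ 2 + Q 0 ^ 2 + Q 1 ^ 2) := by
    rw [← hab]
    field_simp
    ring
  have e2 :
      ((r)⁻¹ * P 1 + 2 * b * (-(r^2)⁻¹) * (a * P 0 + b * P 1))
        * ((r)⁻¹ * Q 0 + 2 * a * (-(r^2)⁻¹) * (a * Q 0 + b * Q 1))
      - ((r)⁻¹ * P 0 + 2 * a * (-(r^2)⁻¹) * (a * P 0 + b * P 1))
        * ((r)⁻¹ * Q 1 + 2 * b * (-(r^2)⁻¹) * (a * Q 0 + b * Q 1))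
      = (r^2)⁻¹ * (P 0 * Q 1 - P 1 * Q 0) := by
    rw [← hab]
    field_simp
    ring
  rw [e1, e2]
  have hinv : (0:ℝ) ≤ (r^2)⁻¹ := by positivity
  have := mul_le_mul_of_nonneg_left key hinv
  nlinarith [this]
end
end

section
/- Let A be a diagonal positive definite n×n matrix with eigenvalues 0 < a₁ ≤ … ≤ a_n, let r = r_A(x) = √(Σ_{j=1}^n a_j x_j²), and let w(x) = φ(r_A(x)) be a C² generalized radially symmetric function with respect to A, with h(r) = φ′(r)/r. If h > 0 and h′ ≤ 0, then the eigenvalues of the Hessian satisfy a_i h + r^{−1}h′ Σ_{j=1}^n a_j² x_j² ≤ λ_i(D²w) ≤ a_i h for every i = 1, …, n. Moreover, if in addition a₁h + a_n r h′ ≥ 0 and ε₀ ≥ 0, then Σ_{i=1}^n arctan λ_i(D²w) ≥ g(ā_{ε₀}), where g(λ₁,…,λ_n) = Σ_{i=1}^n arctan λ_i and ā_{ε₀} = (a₁h + a_n r h′, a₂(h + ε₀ r h′), …, a_n(h + ε₀ r h′)). -/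
open Real Filter Set Metric Bornology Finset

noncomputable section

/-- Eigenvalues of a real symmetric matrix (junk value if the matrix is not symmetric). -/
def symEigs {n : ℕ} (A : Matrix (Fin n) (Fin n) ℝ) : Fin n → ℝ :=
  if h : A.IsHermitian then h.eigenvalues else fun _ => 0

/-- Eigenvalues of a real symmetric matrix listed in increasing order. -/
def sortedEigs {n : ℕ} (A : Matrix (Fin n) (Fin n) ℝ) : Fin n → ℝ :=
  fun i => symEigs A (Tuple.sort (symEigs A) i)

/-- `r_A(x) = √(Σ aⱼ xⱼ²)`. -/
def rA {n : ℕ} (a : Fin n → ℝ) (x : EuclideanSpace ℝ (Fin n)) : ℝ :=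
  Real.sqrt (∑ j, a j * x j ^ 2)

/-- The Hessian `D_{ij}w = aᵢ h δ_{ij} + r⁻¹ h' (aᵢxᵢ)(aⱼxⱼ)` of a generalized radially
symmetric function `w = φ(r_A(x))`, where `H = h(r)` and `H' = h'(r)` at `r = r_A(x)`. -/
def grsHess {n : ℕ} (a : Fin n → ℝ) (H H' : ℝ) (x : EuclideanSpace ℝ (Fin n)) :
    Matrix (Fin n) (Fin n) ℝ :=
  Matrix.of fun i j =>
    a i * H * (if i = j then 1 else 0) + (rA a x)⁻¹ * H' * (a i * x i) * (a j * x j)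

/-!
The Hessian is the negative rank-one perturbation `D + c vvᵀ` of `D = diag(aᵢh)`, with
`c = h'/r ≤ 0` and `v = (aᵢxᵢ)`. Its quadratic form lies between those of `D` and of
`D + c|v|² I` (Cauchy–Schwarz), so the easy half of the Courant–Fischer min-max principle gives
both eigenvalue bounds. For the phase, the defects `aᵢh - λᵢ ≥ 0` add up to `-c|v|²` (compare
traces); as `arctan` is concave on `[0, ∞)`, `Σ arctan λᵢ` is smallest when the whole defect sits on
the smallest entry `a₁h`, and `c|v|² ≥ aₙ r h'` because `|v|² ≤ aₙ r²`.
-/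

open scoped RealInnerProductSpace

lemma Submodule.exists_ne_zero_mem_of_finrank_lt {K V : Type*} [DivisionRing K] [AddCommGroup V]
    [Module K V] [FiniteDimensional K V] {U W : Submodule K V}
    (h : Module.finrank K V < Module.finrank K U + Module.finrank K W) :
    ∃ u ∈ U, u ∈ W ∧ u ≠ 0 := by
  by_contra! hUV
  exact h.not_ge (Submodule.finrank_add_finrank_le_of_disjoint (Submodule.disjoint_def.2 hUV))

section RayleighQuotient

variable {E : Type*} [NormedAddCommGroup E] [InnerProductSpace ℝ E] {ι : Type*} [Fintype ι]

lemma OrthonormalBasis.inner_eq_zero_of_mem_span_image (b : OrthonormalBasis ι ℝ E) {s : Set ι}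
    {u : E} (hu : u ∈ Submodule.span ℝ (b '' s)) {j : ι} (hj : j ∉ s) : ⟪b j, u⟫ = 0 := by
  have hle : Submodule.span ℝ (b '' s) ≤ (ℝ ∙ b j)ᗮ := by
    refine Submodule.span_le.2 ?_
    rintro _ ⟨k, hk, rfl⟩
    exact Submodule.mem_orthogonal_singleton_iff_inner_right.2
      (b.orthonormal.2 fun hjk => hj (hjk ▸ hk))
  exact Submodule.mem_orthogonal_singleton_iff_inner_right.1 (hle hu)

lemma OrthonormalBasis.finrank_span_image (b : OrthonormalBasis ι ℝ E) (s : Finset ι) :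
    Module.finrank ℝ (Submodule.span ℝ (b '' s)) = s.card := by
  have hli : LinearIndependent ℝ (b ∘ (Subtype.val : ↥(s : Set ι) → ι)) :=
    b.orthonormal.linearIndependent.comp _ Subtype.val_injective
  rw [← Subtype.range_coe (s := (s : Set ι)), ← Set.range_comp, finrank_span_eq_card hli]
  simp

lemma OrthonormalBasis.norm_sq_eq_sum_inner_sq (b : OrthonormalBasis ι ℝ E) (u : E) :
    ‖u‖ ^ 2 = ∑ k, ⟪b k, u⟫ ^ 2 := by
  simp only [← b.sum_sq_norm_inner_right u, Real.norm_eq_abs, sq_abs]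

variable {T : E →ₗ[ℝ] E} {e : OrthonormalBasis ι ℝ E} {μ : ι → ℝ}

lemma inner_apply_self_eq_sum_of_eigenbasis (he : ∀ k, T (e k) = μ k • e k) (u : E) :
    ⟪T u, u⟫ = ∑ k, μ k * ⟪e k, u⟫ ^ 2 := by
  nth_rewrite 1 [← e.sum_repr' u]
  simp only [map_sum, map_smul, he, sum_inner, inner_smul_left, conj_trivial]
  exact Finset.sum_congr rfl fun k _ => by ring

lemma inner_apply_self_le_of_mem_span (he : ∀ k, T (e k) = μ k • e k) {s : Set ι} {t : ℝ}
    (hμ : ∀ k ∈ s, μ k ≤ t) {u : E} (hu : u ∈ Submodule.span ℝ (e '' s)) :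
    ⟪T u, u⟫ ≤ t * ‖u‖ ^ 2 := by
  rw [inner_apply_self_eq_sum_of_eigenbasis he, e.norm_sq_eq_sum_inner_sq, Finset.mul_sum]
  refine Finset.sum_le_sum fun k _ => ?_
  by_cases hk : k ∈ s
  · exact mul_le_mul_of_nonneg_right (hμ k hk) (sq_nonneg _)
  · simp [e.inner_eq_zero_of_mem_span_image hu hk]

lemma le_inner_apply_self_of_mem_span (he : ∀ k, T (e k) = μ k • e k) {s : Set ι} {t : ℝ}
    (hμ : ∀ k ∈ s, t ≤ μ k) {u : E} (hu : u ∈ Submodule.span ℝ (e '' s)) :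
    t * ‖u‖ ^ 2 ≤ ⟪T u, u⟫ := by
  rw [inner_apply_self_eq_sum_of_eigenbasis he, e.norm_sq_eq_sum_inner_sq, Finset.mul_sum]
  refine Finset.sum_le_sum fun k _ => ?_
  by_cases hk : k ∈ s
  · exact mul_le_mul_of_nonneg_right (hμ k hk) (sq_nonneg _)
  · simp [e.inner_eq_zero_of_mem_span_image hu hk]

end RayleighQuotient

section CourantFischer

variable {E : Type*} [NormedAddCommGroup E] [InnerProductSpace ℝ E]

lemma OrthonormalBasis.exists_ne_zero_mem_span_image {n : ℕ} (b : OrthonormalBasis (Fin n) ℝ E)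
    {V : Submodule ℝ E} {s : Finset (Fin n)} (h : n < Module.finrank ℝ V + s.card) :
    ∃ u ∈ V, u ∈ Submodule.span ℝ (b '' s) ∧ u ≠ 0 := by
  have := b.toBasis.finiteDimensional_of_finite
  refine Submodule.exists_ne_zero_mem_of_finrank_lt ?_
  rwa [b.finrank_span_image, Module.finrank_eq_card_basis b.toBasis, Fintype.card_fin]

variable {n : ℕ} {T : E →ₗ[ℝ] E} {e : OrthonormalBasis (Fin n) ℝ E} {μ : Fin n → ℝ}

lemma apply_sort_le_of_forall_inner_apply_self_le (he : ∀ k, T (e k) = μ k • e k) (i : Fin n)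
    {V : Submodule ℝ E} (hV : i.val + 1 ≤ Module.finrank ℝ V) {t : ℝ}
    (hVt : ∀ u ∈ V, ⟪T u, u⟫ ≤ t * ‖u‖ ^ 2) : μ (Tuple.sort μ i) ≤ t := by
  obtain ⟨u, huV, hu, hu0⟩ := e.exists_ne_zero_mem_span_image (V := V)
    (s := (Finset.Ici i).map (Tuple.sort μ).toEmbedding)
    (by rw [Finset.card_map, Fin.card_Ici]; omega)
  have hlow : μ (Tuple.sort μ i) * ‖u‖ ^ 2 ≤ ⟪T u, u⟫ := by
    refine le_inner_apply_self_of_mem_span he (fun k hk => ?_) hu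
    obtain ⟨j, hj, rfl⟩ := Finset.mem_map.1 hk
    exact Tuple.monotone_sort μ (Finset.mem_Ici.1 hj)
  exact le_of_mul_le_mul_right (hlow.trans (hVt u huV)) (by positivity)

lemma le_apply_sort_of_forall_le_inner_apply_self (he : ∀ k, T (e k) = μ k • e k) (i : Fin n)
    {V : Submodule ℝ E} (hV : n - i.val ≤ Module.finrank ℝ V) {t : ℝ}
    (hVt : ∀ u ∈ V, t * ‖u‖ ^ 2 ≤ ⟪T u, u⟫) : t ≤ μ (Tuple.sort μ i) := by
  obtain ⟨u, huV, hu, hu0⟩ := e.exists_ne_zero_mem_span_image (V := V)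
    (s := (Finset.Iic i).map (Tuple.sort μ).toEmbedding)
    (by rw [Finset.card_map, Fin.card_Iic]; omega)
  have hup : ⟪T u, u⟫ ≤ μ (Tuple.sort μ i) * ‖u‖ ^ 2 := by
    refine inner_apply_self_le_of_mem_span he (fun k hk => ?_) hu
    obtain ⟨j, hj, rfl⟩ := Finset.mem_map.1 hk
    exact Tuple.monotone_sort μ (Finset.mem_Iic.1 hj)
  exact le_of_mul_le_mul_right ((hVt u huV).trans hup) (by positivity)

end CourantFischer

section Concavity

lemma ConcaveOn.map_add_sub_map_le_map_add_sub_map {S : Set ℝ} {f : ℝ → ℝ} (hf : ConcaveOn ℝ S f)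
    {p q δ : ℝ} (hp : p ∈ S) (hqδ : q + δ ∈ S) (hpq : p ≤ q) (hδ : 0 ≤ δ) :
    f (q + δ) - f q ≤ f (p + δ) - f p := by
  rcases hδ.eq_or_lt with rfl | hδ
  · simp
  have hL : 0 < q + δ - p := by linarith
  -- `q` and `p + δ` are the two convex combinations of `p` and `q + δ` with swapped weights
  have ha : 0 ≤ δ / (q + δ - p) := by positivity
  have hb : 0 ≤ (q - p) / (q + δ - p) := div_nonneg (by linarith) hL.le
  have hab : δ / (q + δ - p) + (q - p) / (q + δ - p) = 1 := by field_simp; ring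
  have hq := hf.2 hp hqδ ha hb hab
  have hpδ := hf.2 hp hqδ hb ha (by rw [add_comm, hab])
  have hq_eq : δ / (q + δ - p) * p + (q - p) / (q + δ - p) * (q + δ) = q := by field_simp; ring
  have hpδ_eq : (q - p) / (q + δ - p) * p + δ / (q + δ - p) * (q + δ) = p + δ := by field_simp; ring
  simp only [smul_eq_mul, hq_eq, hpδ_eq] at hq hpδ
  linear_combination hq + hpδ - (f p + f (q + δ)) * hab

lemma ConcaveOn.sum_map_sub_map_sub_le {ι : Type*} {f : ℝ → ℝ} {m : ℝ}
    (hf : ConcaveOn ℝ (Ici m) f) (s : Finset ι) {d δ : ι → ℝ} (hδ : ∀ i ∈ s, 0 ≤ δ i) {b : ℝ}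
    (hb : ∀ i ∈ s, b ≤ d i) (hm : m ≤ b - ∑ i ∈ s, δ i) :
    ∑ i ∈ s, (f (d i) - f (d i - δ i)) ≤ f b - f (b - ∑ i ∈ s, δ i) := by
  classical
  induction s using Finset.induction_on generalizing b with
  | empty => simp
  | @insert a s ha ih =>
    rw [Finset.sum_insert ha] at hm ⊢
    rw [Finset.sum_insert ha]
    have hδa := hδ a (Finset.mem_insert_self a s)
    have hδs : 0 ≤ ∑ i ∈ s, δ i := Finset.sum_nonneg fun i hi => hδ i (Finset.mem_insert_of_mem hi)
    have hba := hb a (Finset.mem_insert_self a s)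
    have head := hf.map_add_sub_map_le_map_add_sub_map (p := b - δ a) (q := d a - δ a)
      (mem_Ici.2 (by linarith)) (mem_Ici.2 (by linarith)) (by linarith) hδa
    have tail := ih (b := b - δ a) (fun i hi => hδ i (Finset.mem_insert_of_mem hi))
      (fun i hi => by linarith [hb i (Finset.mem_insert_of_mem hi)]) (by linarith)
    rw [sub_add_cancel, sub_add_cancel] at head
    rw [sub_sub] at tail
    linarith

lemma concaveOn_arctan : ConcaveOn ℝ (Ici 0) arctan := by
  refine AntitoneOn.concaveOn_of_deriv (convex_Ici 0) continuous_arctan.continuousOn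
    differentiable_arctan.differentiableOn ?_
  rw [interior_Ici, Real.deriv_arctan]
  intro x hx y hy hxy
  have hx : 0 < x := hx
  dsimp only
  gcongr

end Concavity

section Eigenvalues

variable {n : ℕ} {A : Matrix (Fin n) (Fin n) ℝ}

lemma symEigs_of_isHermitian (hA : A.IsHermitian) : symEigs A = hA.eigenvalues := dif_pos hA

lemma sortedEigs_of_isHermitian (hA : A.IsHermitian) :
    sortedEigs A = hA.eigenvalues ∘ Tuple.sort hA.eigenvalues := by
  funext i
  simp [sortedEigs, symEigs_of_isHermitian hA]

lemma sum_comp_sortedEigs {β : Type*} [AddCommMonoid β] (f : ℝ → β) :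
    ∑ i, f (sortedEigs A i) = ∑ i, f (symEigs A i) :=
  Equiv.sum_comp (Tuple.sort (symEigs A)) (fun i => f (symEigs A i))

lemma sum_sortedEigs (hA : A.IsHermitian) : ∑ i, sortedEigs A i = A.trace := by
  rw [sum_comp_sortedEigs fun x => x, hA.trace_eq_sum_eigenvalues, symEigs_of_isHermitian hA]
  simp

lemma Matrix.IsHermitian.toEuclideanLin_eigenvectorBasis (hA : A.IsHermitian) (k : Fin n) :
    A.toEuclideanLin (hA.eigenvectorBasis k) = hA.eigenvalues k • hA.eigenvectorBasis k := by
  ext j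
  simpa using congrFun (hA.mulVec_eigenvectorBasis k) j

lemma EuclideanSpace.apply_eq_zero_of_mem_span_basisFun_image {ι : Type*} [Fintype ι]
    {s : Set ι} {u : EuclideanSpace ℝ ι}
    (hu : u ∈ Submodule.span ℝ (EuclideanSpace.basisFun ι ℝ '' s)) {j : ι} (hj : j ∉ s) :
    u j = 0 := by
  simpa using (EuclideanSpace.basisFun ι ℝ).inner_eq_zero_of_mem_span_image hu hj

lemma sortedEigs_le_of_forall_inner_le (hA : A.IsHermitian) {d : Fin n → ℝ} (hd : Monotone d)
    (h : ∀ u, ⟪A.toEuclideanLin u, u⟫ ≤ ∑ j, d j * u j ^ 2) (i : Fin n) :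
    sortedEigs A i ≤ d i := by
  rw [sortedEigs_of_isHermitian hA]
  refine apply_sort_le_of_forall_inner_apply_self_le hA.toEuclideanLin_eigenvectorBasis i
    (V := Submodule.span ℝ (EuclideanSpace.basisFun _ ℝ '' ↑(Finset.Iic i)))
    (by rw [OrthonormalBasis.finrank_span_image, Fin.card_Iic]) fun u hu => (h u).trans ?_
  rw [EuclideanSpace.real_norm_sq_eq, Finset.mul_sum]
  refine Finset.sum_le_sum fun j _ => ?_
  by_cases hj : j ≤ i
  · exact mul_le_mul_of_nonneg_right (hd hj) (sq_nonneg _)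
  · simp [EuclideanSpace.apply_eq_zero_of_mem_span_basisFun_image hu (by simpa using hj)]

lemma le_sortedEigs_of_forall_le_inner (hA : A.IsHermitian) {d : Fin n → ℝ} (hd : Monotone d)
    (h : ∀ u, ∑ j, d j * u j ^ 2 ≤ ⟪A.toEuclideanLin u, u⟫) (i : Fin n) :
    d i ≤ sortedEigs A i := by
  rw [sortedEigs_of_isHermitian hA]
  refine le_apply_sort_of_forall_le_inner_apply_self hA.toEuclideanLin_eigenvectorBasis i
    (V := Submodule.span ℝ (EuclideanSpace.basisFun _ ℝ '' ↑(Finset.Ici i)))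
    (by rw [OrthonormalBasis.finrank_span_image, Fin.card_Ici]) fun u hu => le_trans ?_ (h u)
  rw [EuclideanSpace.real_norm_sq_eq, Finset.mul_sum]
  refine Finset.sum_le_sum fun j _ => ?_
  by_cases hj : i ≤ j
  · exact mul_le_mul_of_nonneg_right (hd hj) (sq_nonneg _)
  · simp [EuclideanSpace.apply_eq_zero_of_mem_span_basisFun_image hu (by simpa using hj)]

end Eigenvalues

section RankOnePerturbation

open Matrix

variable {n : ℕ} (d v : Fin n → ℝ) (c : ℝ)

lemma isHermitian_diagonal_add_smul_vecMulVec : (diagonal d + c • vecMulVec v v).IsHermitian := by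
  refine (isHermitian_diagonal d).add (IsHermitian.smul ?_ (IsSelfAdjoint.all c))
  rw [IsHermitian, conjTranspose_vecMulVec, star_trivial]

lemma inner_toEuclideanLin_diagonal_add_smul_vecMulVec (u : EuclideanSpace ℝ (Fin n)) :
    ⟪(diagonal d + c • vecMulVec v v).toEuclideanLin u, u⟫
      = ∑ j, d j * u j ^ 2 + c * (∑ j, v j * u j) ^ 2 := by
  rw [EuclideanSpace.inner_eq_star_dotProduct]
  simp only [toLpLin_apply, add_mulVec, smul_mulVec, vecMulVec_mulVec, mulVec_diagonal,
    star_trivial, dotProduct, Pi.add_apply, Pi.smul_apply, smul_eq_mul, op_smul_eq_mul, mul_add,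
    Finset.sum_add_distrib]
  congr 1
  · exact Finset.sum_congr rfl fun j _ => by ring
  · rw [sq, Finset.mul_sum, Finset.mul_sum]
    exact Finset.sum_congr rfl fun j _ => by ring

lemma trace_diagonal_add_smul_vecMulVec :
    (diagonal d + c • vecMulVec v v).trace = ∑ j, d j + c * ∑ j, v j ^ 2 := by
  simp [trace_vecMulVec, dotProduct, sq]

variable {d} {c}

lemma sortedEigs_diagonal_add_smul_vecMulVec_le (hd : Monotone d) (hc : c ≤ 0) (i : Fin n) :
    sortedEigs (diagonal d + c • vecMulVec v v) i ≤ d i := by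
  refine sortedEigs_le_of_forall_inner_le (isHermitian_diagonal_add_smul_vecMulVec d v c) hd
    (fun u => ?_) i
  rw [inner_toEuclideanLin_diagonal_add_smul_vecMulVec]
  nlinarith [mul_nonpos_of_nonpos_of_nonneg hc (sq_nonneg (∑ j, v j * u j))]

lemma le_sortedEigs_diagonal_add_smul_vecMulVec (hd : Monotone d) (hc : c ≤ 0) (i : Fin n) :
    d i + c * ∑ j, v j ^ 2 ≤ sortedEigs (diagonal d + c • vecMulVec v v) i := by
  refine le_sortedEigs_of_forall_le_inner (isHermitian_diagonal_add_smul_vecMulVec d v c)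
    (hd.add_const _) (fun u => ?_) i
  set S := ∑ j, v j ^ 2
  have hCS : (∑ j, v j * u j) ^ 2 ≤ S * ∑ j, u j ^ 2 := Finset.sum_mul_sq_le_sq_mul_sq _ _ _
  have hsplit : ∑ j, (d j + c * S) * u j ^ 2 = ∑ j, d j * u j ^ 2 + c * (S * ∑ j, u j ^ 2) := by
    simp only [add_mul, Finset.sum_add_distrib, ← Finset.mul_sum, mul_assoc]
  rw [inner_toEuclideanLin_diagonal_add_smul_vecMulVec, hsplit]
  nlinarith [mul_le_mul_of_nonpos_left hCS hc]

lemma arctan_add_sum_arctan_le_sum_arctan_symEigs (hd : Monotone d) (hc : c ≤ 0) {i₀ : Fin n}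
    (hi₀ : ∀ i, i₀ ≤ i) (h₀ : 0 ≤ d i₀ + c * ∑ j, v j ^ 2) :
    arctan (d i₀ + c * ∑ j, v j ^ 2) + ∑ i ∈ Finset.univ.erase i₀, arctan (d i)
      ≤ ∑ i, arctan (symEigs (diagonal d + c • vecMulVec v v) i) := by
  set M := diagonal d + c • vecMulVec v v
  have hdefect : ∑ i, (d i - sortedEigs M i) = -(c * ∑ j, v j ^ 2) := by
    rw [Finset.sum_sub_distrib, sum_sortedEigs (isHermitian_diagonal_add_smul_vecMulVec d v c),
      trace_diagonal_add_smul_vecMulVec]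
    ring
  have key := concaveOn_arctan.sum_map_sub_map_sub_le Finset.univ (b := d i₀)
    (δ := fun i => d i - sortedEigs M i)
    (fun i _ => sub_nonneg.2 (sortedEigs_diagonal_add_smul_vecMulVec_le v hd hc i))
    (fun i _ => hd (hi₀ i)) (by rw [hdefect]; linarith)
  simp only [sub_sub_cancel, hdefect, sub_neg_eq_add, Finset.sum_sub_distrib] at key
  rw [← sum_comp_sortedEigs arctan]
  linarith [Finset.add_sum_erase Finset.univ (fun i => arctan (d i)) (Finset.mem_univ i₀)]

end RankOnePerturbation

section GeneralizedRadial

open Matrix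

variable {n : ℕ} {a : Fin n → ℝ} {x : EuclideanSpace ℝ (Fin n)}

lemma grsHess_eq_diagonal_add_smul_vecMulVec (H H' : ℝ) :
    grsHess a H H' x = diagonal (fun i => a i * H)
      + ((rA a x)⁻¹ * H') • vecMulVec (fun i => a i * x i) (fun i => a i * x i) := by
  ext i j
  simp only [grsHess, of_apply, Matrix.add_apply, diagonal_apply, Matrix.smul_apply,
    vecMulVec_apply, smul_eq_mul]
  split_ifs <;> ring

lemma sum_sq_mul_sq_le_mul_rA_sq (ha : ∀ j, 0 ≤ a j) {M : ℝ} (haM : ∀ j, a j ≤ M) :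
    ∑ j, a j ^ 2 * x j ^ 2 ≤ M * rA a x ^ 2 := by
  rw [rA, sq_sqrt (Finset.sum_nonneg fun j _ => mul_nonneg (ha j) (sq_nonneg _)), Finset.mul_sum]
  refine Finset.sum_le_sum fun j _ => ?_
  have := mul_le_mul_of_nonneg_right (haM j) (mul_nonneg (ha j) (sq_nonneg (x j)))
  nlinarith

end GeneralizedRadial

/-- eigenvalue estimates for the Hessian of a generalized radially symmetric
function with `h > 0`, `h' ≤ 0`, together with the lower bound for the Lagrangian phase. -/
theorem stmt12
    (n : ℕ) (hn : 0 < n) (a : Fin n → ℝ)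
    (hapos : ∀ i, 0 < a i) (hmono : Monotone a)
    (x : EuclideanSpace ℝ (Fin n)) (hx : 0 < rA a x)
    (H H' : ℝ) (hH : 0 < H) (hH' : H' ≤ 0) :
    (∀ i : Fin n,
      a i * H + (rA a x)⁻¹ * H' * (∑ j, (a j) ^ 2 * (x j) ^ 2)
          ≤ sortedEigs (grsHess a H H' x) i ∧
      sortedEigs (grsHess a H H' x) i ≤ a i * H) ∧
    (∀ ε₀ : ℝ, 0 ≤ ε₀ →
      0 ≤ a ⟨0, hn⟩ * H + a ⟨n - 1, Nat.sub_lt hn one_pos⟩ * rA a x * H' →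
      arctan (a ⟨0, hn⟩ * H + a ⟨n - 1, Nat.sub_lt hn one_pos⟩ * rA a x * H')
          + ∑ i ∈ Finset.univ.erase (⟨0, hn⟩ : Fin n),
              arctan (a i * (H + ε₀ * rA a x * H'))
        ≤ ∑ i, arctan (symEigs (grsHess a H H' x) i)) := by
  have hd : Monotone fun i => a i * H := fun i j hij => mul_le_mul_of_nonneg_right (hmono hij) hH.le
  have hc : (rA a x)⁻¹ * H' ≤ 0 := mul_nonpos_of_nonneg_of_nonpos (inv_nonneg.2 hx.le) hH'
  have hv : ∑ j, (a j * x j) ^ 2 = ∑ j, a j ^ 2 * x j ^ 2 := by simp only [mul_pow]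
  rw [grsHess_eq_diagonal_add_smul_vecMulVec]
  refine ⟨fun i => ⟨?_, sortedEigs_diagonal_add_smul_vecMulVec_le _ hd hc i⟩, fun ε₀ hε₀ h₀ => ?_⟩
  · rw [← hv]
    exact le_sortedEigs_diagonal_add_smul_vecMulVec _ hd hc i
  have hS : a ⟨n - 1, Nat.sub_lt hn one_pos⟩ * rA a x * H'
      ≤ (rA a x)⁻¹ * H' * ∑ j, a j ^ 2 * x j ^ 2 :=
    calc a ⟨n - 1, Nat.sub_lt hn one_pos⟩ * rA a x * H'
        = (rA a x)⁻¹ * H' * (a ⟨n - 1, Nat.sub_lt hn one_pos⟩ * rA a x ^ 2) := by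
          field_simp
      _ ≤ _ := mul_le_mul_of_nonpos_left (sum_sq_mul_sq_le_mul_rA_sq (fun j => (hapos j).le)
          fun j => hmono (Nat.le_sub_one_of_lt j.isLt)) hc
  refine le_trans ?_ (arctan_add_sum_arctan_le_sum_arctan_symEigs _ hd hc
    (i₀ := ⟨0, hn⟩) (fun i => Nat.zero_le i.val) (by rw [hv]; linarith))
  rw [hv]
  refine add_le_add (arctan_mono (by linarith)) (Finset.sum_le_sum fun i _ => arctan_mono ?_)
  have : ε₀ * rA a x * H' ≤ 0 := mul_nonpos_of_nonneg_of_nonpos (mul_nonneg hε₀ hx.le) hH'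
  exact mul_le_mul_of_nonneg_left (by linarith) (hapos i).le
end
end

section
/- Let g(λ₁,…,λ_n) = Σ_{i=1}^n arctan λ_i, let a = (a₁,…,a_n) with 0 < a₁ ≤ … ≤ a_n satisfy g(a₁,…,a_n) = θ, let ε₀ > 0, and let f̄ be a monotone decreasing smooth function on [1,∞) with θ ≤ f̄(r) ≤ θ + δ and f̄(r) = θ + O_m(r^{−β}) as r → ∞ (β > 2), and let h̲ be the unique decreasing positive function on [1,∞) determined by g(a₁h̲(r),…,a_n h̲(r)) = f̄(r), so h̲ ≥ 1 and h̲(r) → 1 as r → ∞. Let β₁ > h̲(1). Then there exists a unique nonpositive smooth function I(r,h) on {(r,h) : r ≥ 1, h̲(r) < h ≤ β₁} satisfying g(a₁h + a_n I, a₂h + a₂ε₀I, …, a_n h + a_n ε₀ I) = f̄(r). Moreover: I(r,h) = 0 if and only if h = h̲(r); I is monotone decreasing in both r and h; there exists C > 0 such that |I(r,h) − I(∞,h)| ≤ C r^{−β} (where I(∞,h) denotes the limit of I(r,h) as r → ∞); and ∂I/∂h(∞,1) = −d(A,ε₀). -/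
open Real Filter Set Metric Bornology Finset
open Topology

noncomputable section

/-- The constant `d(A, ε₀)` associated with the eigenvalues `a` of `A`. -/
def dAeps (n : ℕ) (hn : 0 < n) (a : Fin n → ℝ) (ε₀ : ℝ) : ℝ :=
  (a ⟨n - 1, Nat.sub_lt hn one_pos⟩ / (1 + a ⟨0, hn⟩ ^ 2)
      + ε₀ * ∑ i ∈ Finset.univ.erase (⟨0, hn⟩ : Fin n), a i / (1 + a i ^ 2))⁻¹
    * ∑ i, a i / (1 + a i ^ 2)

namespace Stmt13Aux

variable {n : ℕ}

/-- The sum `∑ arctan (cᵢ h + dᵢ y)`. -/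
def FF (c d : Fin n → ℝ) (h y : ℝ) : ℝ := ∑ i, arctan (c i * h + d i * y)

/-- The solution `y` of `FF c d h y = v`, for `p = (h, v)`. -/
def sol (c d : Fin n → ℝ) (p : ℝ × ℝ) : ℝ := Function.invFun (FF c d p.1) p.2

variable {c d : Fin n → ℝ}

lemma FF_strictMono_y (hn : 0 < n) (hc : ∀ i, 0 < c i) (hd : ∀ i, 0 < d i) (h : ℝ) :
    StrictMono (fun y => FF c d h y) := by
  intro y1 y2 hy
  refine Finset.sum_lt_sum (fun i _ => ?_) ⟨⟨0, hn⟩, Finset.mem_univ _, ?_⟩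
  · exact arctan_strictMono.monotone (by nlinarith [(hd i)])
  · exact arctan_strictMono (by nlinarith [hd ⟨0, hn⟩])

lemma FF_mono_h (hn : 0 < n) (hc : ∀ i, 0 < c i) (hd : ∀ i, 0 < d i) (y : ℝ) :
    Monotone (fun h => FF c d h y) := by
  intro h1 h2 hh
  refine Finset.sum_le_sum (fun i _ => ?_)
  exact arctan_strictMono.monotone (by nlinarith [hc i])

lemma FF_strictMono_h (hn : 0 < n) (hc : ∀ i, 0 < c i) (hd : ∀ i, 0 < d i) (y : ℝ) :
    StrictMono (fun h => FF c d h y) := by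
  intro h1 h2 hh
  refine Finset.sum_lt_sum (fun i _ => ?_) ⟨⟨0, hn⟩, Finset.mem_univ _, ?_⟩
  · exact arctan_strictMono.monotone (by nlinarith [hc i])
  · exact arctan_strictMono (by nlinarith [hc ⟨0, hn⟩])

lemma FF_lt (hn : 0 < n) (h y : ℝ) : FF c d h y < n * (π / 2) := by
  have : Nonempty (Fin n) := ⟨⟨0, hn⟩⟩
  calc FF c d h y < ∑ _i : Fin n, (π / 2) :=
        Finset.sum_lt_sum_of_nonempty Finset.univ_nonempty fun i _ => arctan_lt_pi_div_two _
    _ = n * (π / 2) := by rw [Finset.sum_const]; simp [nsmul_eq_mul]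

lemma lt_FF (hn : 0 < n) (h y : ℝ) : -(n * (π / 2)) < FF c d h y := by
  have : Nonempty (Fin n) := ⟨⟨0, hn⟩⟩
  calc -(n * (π / 2)) = ∑ _i : Fin n, -(π / 2) := by
        rw [Finset.sum_const]; simp [nsmul_eq_mul]
    _ < FF c d h y :=
        Finset.sum_lt_sum_of_nonempty Finset.univ_nonempty fun i _ => neg_pi_div_two_lt_arctan _

lemma FF_continuous (h : ℝ) : Continuous (fun y => FF c d h y) := by
  refine continuous_finset_sum _ fun i _ => ?_
  exact Real.continuous_arctan.comp (by continuity)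

lemma FF_tendsto_atTop (hd : ∀ i, 0 < d i) (h : ℝ) :
    Tendsto (fun y => FF c d h y) atTop (𝓝 (n * (π / 2))) := by
  have : (n : ℝ) * (π / 2) = ∑ _i : Fin n, (π / 2) := by
    rw [Finset.sum_const]; simp [nsmul_eq_mul]
  rw [this]
  refine tendsto_finset_sum _ fun i _ => ?_
  have h1 : Tendsto (fun y => c i * h + d i * y) atTop atTop :=
    tendsto_atTop_add_const_left _ _ ((tendsto_id.const_mul_atTop (hd i)))
  exact (tendsto_arctan_atTop.mono_right nhdsWithin_le_nhds).comp h1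

lemma FF_tendsto_atBot (hd : ∀ i, 0 < d i) (h : ℝ) :
    Tendsto (fun y => FF c d h y) atBot (𝓝 (-(n * (π / 2)))) := by
  have : -((n : ℝ) * (π / 2)) = ∑ _i : Fin n, -(π / 2) := by
    rw [Finset.sum_const]; simp [nsmul_eq_mul]
  rw [this]
  refine tendsto_finset_sum _ fun i _ => ?_
  have h1 : Tendsto (fun y => c i * h + d i * y) atBot atBot :=
    tendsto_atBot_add_const_left _ _ ((tendsto_id.const_mul_atBot (hd i)))
  exact (tendsto_arctan_atBot.mono_right nhdsWithin_le_nhds).comp h1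

lemma exists_sol (hn : 0 < n) (hc : ∀ i, 0 < c i) (hd : ∀ i, 0 < d i) (h v : ℝ)
    (hv1 : -(n * (π / 2)) < v) (hv2 : v < n * (π / 2)) : ∃ y, FF c d h y = v := by
  obtain ⟨y1, hy1⟩ := ((FF_tendsto_atBot hd h).eventually_lt_const hv1).exists
  obtain ⟨y2, hy2⟩ := ((FF_tendsto_atTop hd h).eventually_const_lt hv2).exists
  have hy12 : y1 ≤ y2 := by
    by_contra hcon
    exact absurd ((FF_strictMono_y hn hc hd h) (lt_of_not_ge hcon)) (by simp; linarith)
  have hiv := intermediate_value_Icc (f := fun y => FF c d h y) hy12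
    ((FF_continuous (c := c) (d := d) h).continuousOn)
  obtain ⟨y, _, hy⟩ := hiv ⟨le_of_lt hy1, le_of_lt hy2⟩
  exact ⟨y, hy⟩

lemma sol_spec (hn : 0 < n) (hc : ∀ i, 0 < c i) (hd : ∀ i, 0 < d i) {h v : ℝ}
    (hv1 : -(n * (π / 2)) < v) (hv2 : v < n * (π / 2)) :
    FF c d h (sol c d (h, v)) = v :=
  Function.invFun_eq (exists_sol hn hc hd h v hv1 hv2)

lemma sol_unique (hn : 0 < n) (hc : ∀ i, 0 < c i) (hd : ∀ i, 0 < d i) {h v y : ℝ}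
    (hy : FF c d h y = v) : sol c d (h, v) = y := by
  have hex : ∃ y, FF c d h y = v := ⟨y, hy⟩
  have h2 : FF c d h (sol c d (h, v)) = v := Function.invFun_eq hex
  exact (FF_strictMono_y hn hc hd h).injective (by simpa using h2.trans hy.symm)
def LF (p q : ℝ) : ℝ × ℝ →L[ℝ] ℝ :=
  p • ContinuousLinearMap.fst ℝ ℝ ℝ + q • ContinuousLinearMap.snd ℝ ℝ ℝ

@[simp] lemma LF_apply (p q : ℝ) (z : ℝ × ℝ) : LF p q z = p * z.1 + q * z.2 := by
  simp [LF, smul_eq_mul]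

def PP (c d : Fin n → ℝ) (h y : ℝ) : ℝ := ∑ i, c i / (1 + (c i * h + d i * y) ^ 2)
def QQ (c d : Fin n → ℝ) (h y : ℝ) : ℝ := ∑ i, d i / (1 + (c i * h + d i * y) ^ 2)

variable {c d : Fin n → ℝ}

lemma QQ_pos (hn : 0 < n) (hd : ∀ i, 0 < d i) (h y : ℝ) : 0 < QQ c d h y := by
  have : Nonempty (Fin n) := ⟨⟨0, hn⟩⟩
  refine Finset.sum_pos (fun i _ => ?_) Finset.univ_nonempty
  have : (0:ℝ) < 1 + (c i * h + d i * y) ^ 2 := by positivity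
  exact div_pos (hd i) this

lemma hasFDerivAt_FF (h y : ℝ) :
    HasFDerivAt (fun p : ℝ × ℝ => FF c d p.1 p.2)
      (LF (PP c d h y) (QQ c d h y)) (h, y) := by
  have hterm : ∀ i : Fin n, HasFDerivAt (fun p : ℝ × ℝ => arctan (c i * p.1 + d i * p.2))
      ((1 / (1 + (c i * h + d i * y) ^ 2)) • LF (c i) (d i)) (h, y) := by
    intro i
    have hlin : HasFDerivAt (fun p : ℝ × ℝ => c i * p.1 + d i * p.2) (LF (c i) (d i)) (h, y) := by
      have h0 := (LF (c i) (d i)).hasFDerivAt (x := (h, y))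
      exact h0.congr_of_eventuallyEq
        (Filter.EventuallyEq.of_eq (funext fun z => (LF_apply _ _ z).symm))
    exact (Real.hasDerivAt_arctan _).comp_hasFDerivAt (h, y) hlin
  have hsum := HasFDerivAt.sum (u := Finset.univ) (x := ((h, y) : ℝ × ℝ))
    (fun i (_ : i ∈ Finset.univ) => hterm i)
  have heq : (∑ i, (1 / (1 + (c i * h + d i * y) ^ 2)) • LF (c i) (d i))
      = LF (PP c d h y) (QQ c d h y) := by
    apply ContinuousLinearMap.ext
    intro z
    simp only [ContinuousLinearMap.sum_apply, ContinuousLinearMap.smul_apply, LF_apply,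
      smul_eq_mul, PP, QQ]
    rw [Finset.sum_mul, Finset.sum_mul, ← Finset.sum_add_distrib]
    exact Finset.sum_congr rfl fun i _ => by ring
  rw [← heq]
  exact hsum.congr_of_eventuallyEq (Filter.Eventually.of_forall fun p => by simp [FF, Finset.sum_apply])

lemma contDiff_FF : ContDiff ℝ ((⊤ : ℕ∞) : WithTop ℕ∞) (fun p : ℝ × ℝ => FF c d p.1 p.2) := by
  apply ContDiff.sum
  intro i _
  exact Real.contDiff_arctan.comp ((contDiff_const.mul contDiff_fst).add
    (contDiff_const.mul contDiff_snd))

def shear (p q : ℝ) (hq : q ≠ 0) : (ℝ × ℝ) ≃L[ℝ] (ℝ × ℝ) :=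
  LinearEquiv.toContinuousLinearEquiv
  { toFun := fun x => (x.1, p * x.1 + q * x.2)
    invFun := fun x => (x.1, (x.2 - p * x.1) / q)
    map_add' := by intro x y; simp [Prod.ext_iff]; ring
    map_smul' := by intro m x; simp [Prod.ext_iff]; ring
    left_inv := by intro x; simp [Prod.ext_iff]; field_simp
    right_inv := by intro x; simp [Prod.ext_iff]; field_simp; ring }

lemma shear_coe (p q : ℝ) (hq : q ≠ 0) :
    ((shear p q hq : (ℝ × ℝ) ≃L[ℝ] (ℝ × ℝ)) : (ℝ × ℝ) →L[ℝ] (ℝ × ℝ))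
      = (ContinuousLinearMap.fst ℝ ℝ ℝ).prod (LF p q) := by
  apply ContinuousLinearMap.ext
  intro z
  simp [Prod.ext_iff, shear]

lemma contDiffAt_sol (hn : 0 < n) (hc : ∀ i, 0 < c i) (hd : ∀ i, 0 < d i)
    {h₀ v₀ : ℝ} (hv1 : -(n * (π / 2)) < v₀) (hv2 : v₀ < n * (π / 2)) :
    ContDiffAt ℝ ((⊤ : ℕ∞) : WithTop ℕ∞) (sol c d) (h₀, v₀) := by
  set y₀ := sol c d (h₀, v₀) with hy₀
  have hFy₀ : FF c d h₀ y₀ = v₀ := sol_spec hn hc hd hv1 hv2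
  set Φ : ℝ × ℝ → ℝ × ℝ := fun p => (p.1, FF c d p.1 p.2) with hΦ
  have hQ := QQ_pos (c := c) hn hd h₀ y₀
  have hΦdiff : ContDiffAt ℝ ((⊤ : ℕ∞) : WithTop ℕ∞) Φ (h₀, y₀) :=
    (contDiff_fst.prodMk contDiff_FF).contDiffAt
  have hΦd : HasFDerivAt Φ
      ((shear (PP c d h₀ y₀) (QQ c d h₀ y₀) (ne_of_gt hQ) : (ℝ × ℝ) ≃L[ℝ] (ℝ × ℝ))
        : (ℝ × ℝ) →L[ℝ] (ℝ × ℝ)) (h₀, y₀) := by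
    rw [shear_coe]
    exact (hasFDerivAt_fst).prodMk (hasFDerivAt_FF h₀ y₀)
  have hone : (1 : WithTop ℕ∞) ≤ ((⊤ : ℕ∞) : WithTop ℕ∞) := by exact_mod_cast le_top
  set inv := hΦdiff.localInverse hΦd (by simp) with hinv
  have hcd : ContDiffAt ℝ ((⊤ : ℕ∞) : WithTop ℕ∞) inv (Φ (h₀, y₀)) :=
    hΦdiff.to_localInverse hΦd (by simp)
  have hΦa : Φ (h₀, y₀) = (h₀, v₀) := by simp only [hΦ, hFy₀]
  have hev : ∀ᶠ z in 𝓝 (Φ (h₀, y₀)), Φ (inv z) = z :=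
    (hΦdiff.hasStrictFDerivAt' hΦd (by simp)).eventually_right_inverse
  have hev2 : (sol c d) =ᶠ[𝓝 ((h₀, v₀) : ℝ × ℝ)] (fun z => (inv z).2) := by
    rw [← hΦa]
    filter_upwards [hev] with z hz
    have h1 : FF c d z.1 (inv z).2 = z.2 := by
      have hfst : (inv z).1 = z.1 := by simpa [hΦ] using congrArg Prod.fst hz
      have hsnd2 : FF c d (inv z).1 (inv z).2 = z.2 := by
        simpa [hΦ] using congrArg Prod.snd hz
      rw [← hfst]; exact hsnd2
    have := sol_unique hn hc hd h1
    simpa using this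
  have hsnd : ContDiffAt ℝ ((⊤ : ℕ∞) : WithTop ℕ∞) (fun z => (inv z).2) (h₀, v₀) := by
    rw [← hΦa]
    exact contDiffAt_snd.comp _ hcd
  exact hsnd.congr_of_eventuallyEq hev2

lemma FF_def (c d : Fin n → ℝ) (h y : ℝ) : FF c d h y = ∑ i, arctan (c i * h + d i * y) := rfl
lemma PP_def (c d : Fin n → ℝ) (h y : ℝ) :
    PP c d h y = ∑ i, c i / (1 + (c i * h + d i * y) ^ 2) := rfl
lemma QQ_def (c d : Fin n → ℝ) (h y : ℝ) :
    QQ c d h y = ∑ i, d i / (1 + (c i * h + d i * y) ^ 2) := rfl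

end Stmt13Aux


open Stmt13Aux

set_option maxHeartbeats 1000000

/-- existence, uniqueness and properties of the implicit function `I(r,h)`
solving `g(a₁h + aₙI, a₂h + a₂ε₀I, …, aₙh + aₙε₀I) = f̄(r)`. -/
theorem stmt13
    (n : ℕ) (hn : 0 < n) (a : Fin n → ℝ)
    (hapos : ∀ i, 0 < a i) (hmono : Monotone a)
    (θ : ℝ) (hθ : (∑ i, arctan (a i)) = θ)
    (ε₀ : ℝ) (hε₀ : 0 < ε₀)
    (δ : ℝ) (m : ℕ) (β : ℝ) (hβ : 2 < β)
    (fbar : ℝ → ℝ)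
    (hfsm : ContDiffOn ℝ (⊤ : ℕ∞) fbar (Set.Ici 1))
    (hfanti : AntitoneOn fbar (Set.Ici 1))
    (hfrange : ∀ r : ℝ, 1 ≤ r → θ ≤ fbar r ∧ fbar r ≤ θ + δ)
    (hfdecay : ∀ t ≤ m, ∃ C : ℝ, ∀ r : ℝ, 1 ≤ r →
      |iteratedDerivWithin t (fun s => fbar s - θ) (Set.Ici 1) r| ≤ C * r ^ (-β - (t : ℝ)))
    (hlo : ℝ → ℝ)
    (hhlo : ∀ r : ℝ, 1 ≤ r → 1 ≤ hlo r ∧ (∑ i, arctan (a i * hlo r)) = fbar r)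
    (hhanti : AntitoneOn hlo (Set.Ici 1))
    (hhlim : Tendsto hlo atTop (nhds 1))
    (β₁ : ℝ) (hβ₁ : hlo 1 < β₁) :
    ∃ I : ℝ → ℝ → ℝ,
      ContDiffOn ℝ (⊤ : ℕ∞) (fun p : ℝ × ℝ => I p.1 p.2)
        {p : ℝ × ℝ | 1 ≤ p.1 ∧ hlo p.1 < p.2 ∧ p.2 ≤ β₁} ∧
      (∀ r h : ℝ, 1 ≤ r → hlo r < h → h ≤ β₁ →
        I r h ≤ 0 ∧
        arctan (a ⟨0, hn⟩ * h + a ⟨n - 1, Nat.sub_lt hn one_pos⟩ * I r h)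
            + ∑ i ∈ Finset.univ.erase (⟨0, hn⟩ : Fin n),
                arctan (a i * h + a i * ε₀ * I r h)
          = fbar r) ∧
      (∀ I' : ℝ → ℝ → ℝ,
        (∀ r h : ℝ, 1 ≤ r → hlo r < h → h ≤ β₁ →
          I' r h ≤ 0 ∧
          arctan (a ⟨0, hn⟩ * h + a ⟨n - 1, Nat.sub_lt hn one_pos⟩ * I' r h)
              + ∑ i ∈ Finset.univ.erase (⟨0, hn⟩ : Fin n),
                  arctan (a i * h + a i * ε₀ * I' r h)
            = fbar r) →
        ∀ r h : ℝ, 1 ≤ r → hlo r < h → h ≤ β₁ → I' r h = I r h) ∧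
      (∀ r h : ℝ, 1 ≤ r → hlo r < h → h ≤ β₁ → (I r h = 0 ↔ h = hlo r)) ∧
      (∀ r r' h : ℝ, 1 ≤ r → hlo r < h → h ≤ β₁ → 1 ≤ r' → hlo r' < h →
        r ≤ r' → I r' h ≤ I r h) ∧
      (∀ r h h' : ℝ, 1 ≤ r → hlo r < h → h ≤ β₁ → hlo r < h' → h' ≤ β₁ →
        h ≤ h' → I r h' ≤ I r h) ∧
      ∃ Iinf : ℝ → ℝ,
        (∀ h : ℝ, 1 ≤ h → h ≤ β₁ →
          arctan (a ⟨0, hn⟩ * h + a ⟨n - 1, Nat.sub_lt hn one_pos⟩ * Iinf h)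
              + ∑ i ∈ Finset.univ.erase (⟨0, hn⟩ : Fin n),
                  arctan (a i * h + a i * ε₀ * Iinf h)
            = θ) ∧
        (∀ h : ℝ, 1 < h → h ≤ β₁ → Tendsto (fun r => I r h) atTop (nhds (Iinf h))) ∧
        (∃ C : ℝ, 0 < C ∧ ∀ r h : ℝ, 1 ≤ r → hlo r < h → h ≤ β₁ →
          |I r h - Iinf h| ≤ C * r ^ (-β)) ∧
        HasDerivWithinAt Iinf (-(dAeps n hn a ε₀)) (Set.Ici 1) 1 := by
  classical
  set d : Fin n → ℝ :=
    fun i => if i = (⟨0, hn⟩ : Fin n) then a ⟨n - 1, Nat.sub_lt hn one_pos⟩ else a i * ε₀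
    with hd_def
  have hd : ∀ i, 0 < d i := by
    intro i
    by_cases hi : i = (⟨0, hn⟩ : Fin n)
    · simp only [hd_def, hi, if_pos rfl]; exact hapos _
    · simp only [hd_def, if_neg hi]; exact mul_pos (hapos i) hε₀
  have hc := hapos
  have hone : (1 : WithTop ℕ∞) ≤ ((⊤ : ℕ∞) : WithTop ℕ∞) := by exact_mod_cast le_top
  -- bridge between the statement's expression and FF
  have hbridge : ∀ h y : ℝ,
      arctan (a ⟨0, hn⟩ * h + a ⟨n - 1, Nat.sub_lt hn one_pos⟩ * y)
          + ∑ i ∈ Finset.univ.erase (⟨0, hn⟩ : Fin n), arctan (a i * h + a i * ε₀ * y)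
        = FF a d h y := by
    intro h y
    have h1 : ∀ i ∈ Finset.univ.erase (⟨0, hn⟩ : Fin n),
        arctan (a i * h + a i * ε₀ * y) = arctan (a i * h + d i * y) := by
      intro i hi
      have hne : i ≠ (⟨0, hn⟩ : Fin n) := (Finset.mem_erase.mp hi).1
      simp [hd_def, hne, mul_assoc]
    rw [Finset.sum_congr rfl h1, FF_def,
      ← Finset.add_sum_erase _ _ (Finset.mem_univ (⟨0, hn⟩ : Fin n))]
    congr 2
  have hF0 : ∀ h : ℝ, FF a d h 0 = ∑ i, arctan (a i * h) := by
    intro h; rw [FF_def]; simp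
  have hθF : FF a d 1 0 = θ := by rw [hF0]; simpa using hθ
  have hθb1 : -(n * (π / 2)) < θ := hθF ▸ lt_FF hn 1 0
  have hθb2 : θ < n * (π / 2) := hθF ▸ FF_lt hn 1 0
  have hfbeq : ∀ r : ℝ, 1 ≤ r → fbar r = FF a d (hlo r) 0 := by
    intro r hr; rw [hF0]; exact ((hhlo r hr).2).symm
  have hfb1 : ∀ r : ℝ, 1 ≤ r → -(n * (π / 2)) < fbar r := by
    intro r hr; rw [hfbeq r hr]; exact lt_FF hn _ 0
  have hfb2 : ∀ r : ℝ, 1 ≤ r → fbar r < n * (π / 2) := by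
    intro r hr; rw [hfbeq r hr]; exact FF_lt hn _ 0
  set I : ℝ → ℝ → ℝ := fun r h => sol a d (h, fbar r) with hI
  set Iinf : ℝ → ℝ := fun h => sol a d (h, θ) with hIinf
  have hspec : ∀ r h : ℝ, 1 ≤ r → FF a d h (I r h) = fbar r := by
    intro r h hr; exact sol_spec hn hc hd (hfb1 r hr) (hfb2 r hr)
  have hspecInf : ∀ h : ℝ, FF a d h (Iinf h) = θ := by
    intro h; exact sol_spec hn hc hd hθb1 hθb2
  -- strict negativity
  have hIneg : ∀ r h : ℝ, 1 ≤ r → hlo r < h → I r h < 0 := by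
    intro r h hr hlt
    have h1 : FF a d h (I r h) < FF a d h 0 := by
      rw [hspec r h hr, hfbeq r hr]
      exact FF_strictMono_h hn hc hd 0 hlt
    exact (FF_strictMono_y hn hc hd h).lt_iff_lt.mp h1
  have hIleInf : ∀ r h : ℝ, 1 ≤ r → Iinf h ≤ I r h := by
    intro r h hr
    have h1 : FF a d h (Iinf h) ≤ FF a d h (I r h) := by
      rw [hspec r h hr, hspecInf h]; exact (hfrange r hr).1
    exact ((FF_strictMono_y hn hc hd h).le_iff_le).mp h1
  have hIinfle0 : ∀ h : ℝ, 1 ≤ h → Iinf h ≤ 0 := by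
    intro h h1
    have : FF a d h (Iinf h) ≤ FF a d h 0 := by
      rw [hspecInf h, ← hθF]
      exact FF_mono_h hn hc hd 0 h1
    exact ((FF_strictMono_y hn hc hd h).le_iff_le).mp this
  set ymin : ℝ := sol a d (β₁, θ) with hymin_def
  have hymin_spec : FF a d β₁ ymin = θ := sol_spec hn hc hd hθb1 hθb2
  have hyminle : ∀ h : ℝ, h ≤ β₁ → ymin ≤ Iinf h := by
    intro h hb
    have h1 : FF a d β₁ ymin ≤ FF a d β₁ (Iinf h) := by
      rw [hymin_spec, ← hspecInf h]
      exact FF_mono_h hn hc hd _ hb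
    exact ((FF_strictMono_y hn hc hd β₁).le_iff_le).mp h1
  refine ⟨I, ?_, ?_, ?_, ?_, ?_, ?_, Iinf, ?_, ?_, ?_, ?_⟩
  · -- smoothness
    intro p hp
    obtain ⟨hp1, hp2, hp3⟩ := hp
    have hcd : ContDiffAt ℝ ((⊤ : ℕ∞) : WithTop ℕ∞) (sol a d) (p.2, fbar p.1) :=
      contDiffAt_sol hn hc hd (hfb1 p.1 hp1) (hfb2 p.1 hp1)
    have hinner : ContDiffWithinAt ℝ ((⊤ : ℕ∞) : WithTop ℕ∞)
        (fun q : ℝ × ℝ => ((q.2, fbar q.1) : ℝ × ℝ))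
        {p : ℝ × ℝ | 1 ≤ p.1 ∧ hlo p.1 < p.2 ∧ p.2 ≤ β₁} p := by
      refine ContDiffWithinAt.prodMk contDiffAt_snd.contDiffWithinAt ?_
      have hf : ContDiffWithinAt ℝ ((⊤ : ℕ∞) : WithTop ℕ∞) fbar (Set.Ici 1) p.1 :=
        hfsm p.1 hp1
      exact hf.comp p contDiffAt_fst.contDiffWithinAt (fun q hq => hq.1)
    exact hcd.comp_contDiffWithinAt p hinner
  · -- equation and nonpositivity
    intro r h hr hlt hle
    refine ⟨le_of_lt (hIneg r h hr hlt), ?_⟩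
    rw [hbridge]; exact hspec r h hr
  · -- uniqueness
    intro I' hI' r h hr hlt hle
    have h2 := (hI' r h hr hlt hle).2
    rw [hbridge] at h2
    exact (sol_unique hn hc hd h2).symm
  · -- zero iff
    intro r h hr hlt hle
    constructor
    · intro h0; exact absurd h0 (ne_of_lt (hIneg r h hr hlt))
    · intro h0; exact absurd (h0 ▸ hlt) (lt_irrefl _)
  · -- antitone in r
    intro r r' h hr hlt hle hr' hlt' hrr'
    have h1 : FF a d h (I r' h) ≤ FF a d h (I r h) := by
      rw [hspec r h hr, hspec r' h hr']
      exact hfanti hr hr' hrr'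
    exact ((FF_strictMono_y hn hc hd h).le_iff_le).mp h1
  · -- antitone in h
    intro r h h' hr hlt hle hlt' hle' hhh
    have h1 : FF a d h' (I r h') ≤ FF a d h' (I r h) := by
      rw [hspec r h' hr, ← hspec r h hr]
      exact FF_mono_h hn hc hd _ hhh
    exact ((FF_strictMono_y hn hc hd h').le_iff_le).mp h1
  · -- equation for Iinf
    intro h h1 hb
    rw [hbridge]; exact hspecInf h
  · -- tendsto
    intro h h1 hb
    have hcont : ContinuousAt (sol a d) (h, θ) :=
      (contDiffAt_sol hn hc hd hθb1 hθb2).continuousAt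
    have htf : Tendsto fbar atTop (𝓝 θ) := by
      have hg : Continuous (fun x : ℝ => ∑ i, arctan (a i * x)) := by
        refine continuous_finset_sum _ fun i _ => ?_
        exact Real.continuous_arctan.comp (continuous_const.mul continuous_id)
      have h2 : Tendsto (fun r => ∑ i, arctan (a i * hlo r)) atTop (𝓝 (∑ i, arctan (a i * 1))) :=
        (hg.continuousAt.tendsto).comp hhlim
      have h3 : (∑ i, arctan (a i * 1)) = θ := by simpa using hθ
      rw [h3] at h2
      refine h2.congr' ?_
      filter_upwards [eventually_ge_atTop (1 : ℝ)] with r hr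
      exact (hhlo r hr).2
    have := hcont.tendsto.comp (tendsto_const_nhds.prodMk_nhds htf)
    exact this
  · -- decay estimate
    obtain ⟨C₀, hC₀⟩ := hfdecay 0 (Nat.zero_le m)
    have hC0' : ∀ r : ℝ, 1 ≤ r → |fbar r - θ| ≤ C₀ * r ^ (-β) := by
      intro r hr
      have h2 := hC₀ r hr
      rw [iteratedDerivWithin_zero] at h2
      simpa using h2
    set c0 : ℝ := a ⟨0, hn⟩ with hc0
    set d0 : ℝ := d ⟨0, hn⟩ with hd0
    have hc0pos : 0 < c0 := hapos _
    have hd0pos : 0 < d0 := hd _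
    set B : ℝ := c0 * max β₁ 1 + d0 * max (-ymin) 0 with hB
    set κ : ℝ := d0 / (1 + B ^ 2) with hκ
    have hκpos : 0 < κ := div_pos hd0pos (by positivity)
    -- the key lower Lipschitz bound
    have hkey : ∀ h y₁ y₂ : ℝ, 1 ≤ h → h ≤ β₁ → ymin ≤ y₁ → y₁ ≤ y₂ → y₂ ≤ 0 →
        κ * (y₂ - y₁) ≤ FF a d h y₂ - FF a d h y₁ := by
      intro h y₁ y₂ hh1 hhb hy1 hy12 hy20
      have hφ : MonotoneOn (fun y => arctan (c0 * h + d0 * y) - κ * y) (Set.Icc ymin 0) := by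
        have hderiv : ∀ y : ℝ, HasDerivAt (fun y => arctan (c0 * h + d0 * y) - κ * y)
            (1 / (1 + (c0 * h + d0 * y) ^ 2) * d0 - κ) y := by
          intro y
          have hlin : HasDerivAt (fun y : ℝ => c0 * h + d0 * y) d0 y := by
            simpa using ((hasDerivAt_id y).const_mul d0).const_add (c0 * h)
          have h1 := (Real.hasDerivAt_arctan (c0 * h + d0 * y)).comp y hlin
          have h2 : HasDerivAt (fun y : ℝ => κ * y) κ y := by
            simpa using (hasDerivAt_id y).const_mul κ
          exact h1.sub h2
        refine monotoneOn_of_deriv_nonneg (convex_Icc _ _) ?_ ?_ ?_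
        · exact Continuous.continuousOn (by
            refine ((Real.continuous_arctan.comp ?_).sub (continuous_const.mul continuous_id))
            exact continuous_const.add (continuous_const.mul continuous_id))
        · intro y hy
          exact (hderiv y).differentiableAt.differentiableWithinAt
        · intro y hy
          rw [(hderiv y).deriv]
          rw [interior_Icc] at hy
          have hyb : |c0 * h + d0 * y| ≤ B := by
            rw [abs_le]
            constructor
            · have h1 : -(d0 * max (-ymin) 0) ≤ d0 * y := by nlinarith [hy.1, le_max_left (-ymin) (0:ℝ)]
              nlinarith [le_max_left β₁ (1:ℝ), le_max_right β₁ (1:ℝ)]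
            · have h1 : d0 * y ≤ 0 := by nlinarith [hy.2]
              nlinarith [le_max_left β₁ (1:ℝ), le_max_right β₁ (1:ℝ),
                mul_nonneg hd0pos.le (le_max_right (-ymin) (0:ℝ))]
          have hsq : (c0 * h + d0 * y) ^ 2 ≤ B ^ 2 := sq_le_sq' (by linarith [abs_le.mp hyb]) (abs_le.mp hyb).2
          have hden : (0:ℝ) < 1 + (c0 * h + d0 * y) ^ 2 := by positivity
          have hκle : κ ≤ 1 / (1 + (c0 * h + d0 * y) ^ 2) * d0 := by
            rw [hκ, one_div, inv_mul_eq_div]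
            exact div_le_div_of_nonneg_left hd0pos.le hden (by nlinarith)
          linarith
      have hmem1 : y₁ ∈ Set.Icc ymin 0 := ⟨hy1, le_trans hy12 hy20⟩
      have hmem2 : y₂ ∈ Set.Icc ymin 0 := ⟨le_trans hy1 hy12, hy20⟩
      have h0 := hφ hmem1 hmem2 hy12
      have hterm : κ * (y₂ - y₁) ≤ arctan (c0 * h + d0 * y₂) - arctan (c0 * h + d0 * y₁) := by
        simp only at h0; linarith
      have hrest : ∑ i ∈ Finset.univ.erase (⟨0, hn⟩ : Fin n), arctan (a i * h + d i * y₁)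
          ≤ ∑ i ∈ Finset.univ.erase (⟨0, hn⟩ : Fin n), arctan (a i * h + d i * y₂) := by
        refine Finset.sum_le_sum fun i _ => ?_
        exact arctan_strictMono.monotone (by nlinarith [hd i])
      have hFF1 : FF a d h y₁ = arctan (c0 * h + d0 * y₁)
          + ∑ i ∈ Finset.univ.erase (⟨0, hn⟩ : Fin n), arctan (a i * h + d i * y₁) := by
        rw [FF_def, ← Finset.add_sum_erase _ _ (Finset.mem_univ (⟨0, hn⟩ : Fin n))]
      have hFF2 : FF a d h y₂ = arctan (c0 * h + d0 * y₂)
          + ∑ i ∈ Finset.univ.erase (⟨0, hn⟩ : Fin n), arctan (a i * h + d i * y₂) := by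
        rw [FF_def, ← Finset.add_sum_erase _ _ (Finset.mem_univ (⟨0, hn⟩ : Fin n))]
      rw [hFF1, hFF2]
      linarith
    refine ⟨max C₀ 0 / κ + 1, by positivity, ?_⟩
    intro r h hr hlt hle
    have h1le : (1:ℝ) ≤ h := le_trans (hhlo r hr).1 (le_of_lt hlt)
    have hy12 : Iinf h ≤ I r h := hIleInf r h hr
    have habs : |I r h - Iinf h| = I r h - Iinf h := abs_of_nonneg (by linarith)
    have hk := hkey h (Iinf h) (I r h) h1le hle (hyminle h hle) hy12
      (le_of_lt (hIneg r h hr hlt))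
    rw [hspec r h hr, hspecInf h] at hk
    have hub : fbar r - θ ≤ max C₀ 0 * r ^ (-β) := by
      have := hC0' r hr
      have h2 : fbar r - θ ≤ |fbar r - θ| := le_abs_self _
      have h3 : C₀ * r ^ (-β) ≤ max C₀ 0 * r ^ (-β) := by
        have : (0:ℝ) < r ^ (-β) := Real.rpow_pos_of_pos (by linarith) _
        nlinarith [le_max_left C₀ (0:ℝ)]
      linarith
    have hrpos : (0:ℝ) < r ^ (-β) := Real.rpow_pos_of_pos (by linarith) _
    rw [habs]
    have h4 : κ * (I r h - Iinf h) ≤ max C₀ 0 * r ^ (-β) := by linarith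
    have h5 : I r h - Iinf h ≤ max C₀ 0 / κ * r ^ (-β) := by
      rw [div_mul_eq_mul_div, le_div_iff₀ hκpos]
      nlinarith
    nlinarith
  · -- derivative of Iinf at 1
    have hIinf1 : Iinf 1 = 0 := by
      have : FF a d 1 (0:ℝ) = θ := hθF
      exact sol_unique hn hc hd this
    have hdiffsol : ContDiffAt ℝ ((⊤ : ℕ∞) : WithTop ℕ∞) (sol a d) ((1 : ℝ), θ) :=
      contDiffAt_sol hn hc hd hθb1 hθb2
    have hdiff : DifferentiableAt ℝ Iinf 1 := by
      have hinner : DifferentiableAt ℝ (fun h : ℝ => ((h, θ) : ℝ × ℝ)) 1 :=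
        differentiableAt_id.prodMk (differentiableAt_const θ)
      exact (hdiffsol.differentiableAt (by simp)).comp 1 hinner
    set D' : ℝ := deriv Iinf 1 with hD'def
    have hD' : HasDerivAt Iinf D' 1 := hdiff.hasDerivAt
    have hchain : HasDerivAt (fun h => FF a d h (Iinf h))
        (PP a d 1 0 + QQ a d 1 0 * D') 1 := by
      have hF := hasFDerivAt_FF (c := a) (d := d) 1 0
      rw [← hIinf1] at hF
      have hcurve : HasDerivAt (fun h : ℝ => ((h, Iinf h) : ℝ × ℝ)) ((1 : ℝ), D') 1 :=
        (hasDerivAt_id (1:ℝ)).prodMk hD'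
      have h2 := hF.comp_hasDerivAt 1 hcurve
      have h3 : HasDerivAt (fun h => FF a d h (Iinf h))
          (PP a d 1 (Iinf 1) + QQ a d 1 (Iinf 1) * D') 1 := by
        simp only [LF_apply, mul_one] at h2
        exact h2
      rwa [hIinf1] at h3
    have hconst : HasDerivAt (fun h => FF a d h (Iinf h)) 0 1 := by
      have heq : (fun h : ℝ => FF a d h (Iinf h)) = fun _ => θ := funext fun h => hspecInf h
      rw [heq]; exact hasDerivAt_const 1 θ
    have heq0 : PP a d 1 0 + QQ a d 1 0 * D' = 0 := hchain.unique hconst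
    have hPval : PP a d 1 0 = ∑ i, a i / (1 + a i ^ 2) := by
      rw [PP_def]
      refine Finset.sum_congr rfl fun i _ => ?_
      norm_num
    have hQval : QQ a d 1 0 = a ⟨n - 1, Nat.sub_lt hn one_pos⟩ / (1 + a ⟨0, hn⟩ ^ 2)
        + ε₀ * ∑ i ∈ Finset.univ.erase (⟨0, hn⟩ : Fin n), a i / (1 + a i ^ 2) := by
      rw [QQ_def, ← Finset.add_sum_erase _ _ (Finset.mem_univ (⟨0, hn⟩ : Fin n))]
      have h1 : ∀ i ∈ Finset.univ.erase (⟨0, hn⟩ : Fin n),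
          d i / (1 + (a i * 1 + d i * 0) ^ 2) = ε₀ * (a i / (1 + a i ^ 2)) := by
        intro i hi
        have hne : i ≠ (⟨0, hn⟩ : Fin n) := (Finset.mem_erase.mp hi).1
        simp only [hd_def, if_neg hne, mul_one, mul_zero, add_zero]
        ring
      rw [Finset.sum_congr rfl h1, ← Finset.mul_sum]
      congr 1
      simp [hd_def]
    have hQpos : 0 < QQ a d 1 0 := QQ_pos hn hd 1 0
    have hfinal : -(dAeps n hn a ε₀) = D' := by
      rw [dAeps, ← hQval, ← hPval]
      have hQne : QQ a d 1 0 ≠ 0 := ne_of_gt hQpos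
      field_simp
      linarith [heq0]
    rw [← hfinal] at hD'
    exact hD'.hasDerivWithinAt
end
end

section
/- Let g(λ₁,…,λ_n) = Σ_{i=1}^n arctan λ_i, let a = (a₁,…,a_n) with 0 < a₁ ≤ … ≤ a_n satisfy g(a) = θ, let ε₀ > 0, and let f̲ be a monotone increasing smooth function on [1,∞) with θ − δ ≤ f̲(r) ≤ θ and f̲(r) = θ + O_m(r^{−β}) as r → ∞ (β > 2), and let h̄ be the unique increasing positive function on [1,∞) determined by g(a₁h̄(r),…,a_n h̄(r)) = f̲(r), so h̄ ≤ 1 and h̄(r) → 1 as r → ∞. Let 0 < β₂ < h̄(1). Then on {(r,h₂) : r ≥ 1, β₂ ≤ h₂ ≤ h̄(1)} there exists a unique positive smooth function J(r,h₂) satisfying g(a₁h₂ + a_n J, a₂h₂ + a₂ε₀J, …, a_n h₂ + a_n ε₀ J) = f̲(r). Moreover: J(r,h₂) = 0 if and only if h₂ = h̄(r); J is monotone increasing in r and monotone decreasing in h₂; there exists C > 0 such that |J(r,h₂) − J(∞,h₂)| ≤ C r^{−β} (where J(∞,h₂) denotes the limit of J(r,h₂) as r → ∞); and ∂J/∂h₂(∞,1)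 = −d(A,ε₀). -/
open Real Filter Set Metric Bornology Finset
open scoped Topology

noncomputable section

lemma arctan_sub_ge' {B x y : ℝ} (hx : 0 ≤ x) (hxy : x ≤ y) (hyB : y ≤ B) :
    (y - x) / (1 + B ^ 2) ≤ arctan y - arctan x := by
  rcases eq_or_lt_of_le hxy with rfl | hlt
  · simp
  obtain ⟨ξ, hξ, hs⟩ := exists_hasDerivAt_eq_slope arctan (fun t => 1 / (1 + t ^ 2)) hlt
    Real.continuous_arctan.continuousOn (fun t _ => Real.hasDerivAt_arctan t)
  have hξ0 : 0 ≤ ξ := le_of_lt (lt_of_le_of_lt hx hξ.1)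
  have hξB : ξ ≤ B := le_of_lt (lt_of_lt_of_le hξ.2 hyB)
  have hne : y - x ≠ 0 := by intro h; have := sub_eq_zero.mp h; linarith
  have h1 : arctan y - arctan x = (y - x) * (1 / (1 + ξ ^ 2)) := by
    rw [hs]; field_simp
  rw [h1]
  have h2 : (1:ℝ) / (1 + B ^ 2) ≤ 1 / (1 + ξ ^ 2) := by
    gcongr
  have hyx : 0 ≤ y - x := by linarith
  calc (y - x) / (1 + B ^ 2) = (y - x) * (1 / (1 + B ^ 2)) := by ring
  _ ≤ (y - x) * (1 / (1 + ξ ^ 2)) := by nlinarith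

set_option maxHeartbeats 2000000 in
/-- existence, uniqueness and properties of the implicit function `J(r,h₂)`
solving `g(a₁h₂ + aₙJ, a₂h₂ + a₂ε₀J, …, aₙh₂ + aₙε₀J) = f̲(r)`. -/
theorem stmt18
    (n : ℕ) (hn : 0 < n) (a : Fin n → ℝ)
    (hapos : ∀ i, 0 < a i) (hmono : Monotone a)
    (θ : ℝ) (hθ : (∑ i, arctan (a i)) = θ)
    (ε₀ : ℝ) (hε₀ : 0 < ε₀)
    (δ : ℝ) (m : ℕ) (β : ℝ) (hβ : 2 < β)
    (flo : ℝ → ℝ)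
    (hfsm : ContDiffOn ℝ (⊤ : ℕ∞) flo (Set.Ici 1))
    (hfmono : MonotoneOn flo (Set.Ici 1))
    (hfrange : ∀ r : ℝ, 1 ≤ r → θ - δ ≤ flo r ∧ flo r ≤ θ)
    (hfdecay : ∀ t ≤ m, ∃ C : ℝ, ∀ r : ℝ, 1 ≤ r →
      |iteratedDerivWithin t (fun s => flo s - θ) (Set.Ici 1) r| ≤ C * r ^ (-β - (t : ℝ)))
    (hup : ℝ → ℝ)
    (hhup : ∀ r : ℝ, 1 ≤ r → 0 < hup r ∧ hup r ≤ 1 ∧ (∑ i, arctan (a i * hup r)) = flo r)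
    (hhmono : MonotoneOn hup (Set.Ici 1))
    (hhlim : Tendsto hup atTop (nhds 1))
    (β₂ : ℝ) (hβ₂pos : 0 < β₂) (hβ₂ : β₂ < hup 1) :
    ∃ J : ℝ → ℝ → ℝ,
      ContDiffOn ℝ (⊤ : ℕ∞) (fun p : ℝ × ℝ => J p.1 p.2)
        {p : ℝ × ℝ | 1 ≤ p.1 ∧ β₂ ≤ p.2 ∧ p.2 ≤ hup 1} ∧
      (∀ r h : ℝ, 1 ≤ r → β₂ ≤ h → h ≤ hup 1 →
        0 ≤ J r h ∧
        arctan (a ⟨0, hn⟩ * h + a ⟨n - 1, Nat.sub_lt hn one_pos⟩ * J r h)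
            + ∑ i ∈ Finset.univ.erase (⟨0, hn⟩ : Fin n),
                arctan (a i * h + a i * ε₀ * J r h)
          = flo r) ∧
      (∀ J' : ℝ → ℝ → ℝ,
        (∀ r h : ℝ, 1 ≤ r → β₂ ≤ h → h ≤ hup 1 →
          0 ≤ J' r h ∧
          arctan (a ⟨0, hn⟩ * h + a ⟨n - 1, Nat.sub_lt hn one_pos⟩ * J' r h)
              + ∑ i ∈ Finset.univ.erase (⟨0, hn⟩ : Fin n),
                  arctan (a i * h + a i * ε₀ * J' r h)
            = flo r) →
        ∀ r h : ℝ, 1 ≤ r → β₂ ≤ h → h ≤ hup 1 → J' r h = J r h) ∧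
      (∀ r h : ℝ, 1 ≤ r → β₂ ≤ h → h ≤ hup 1 → (J r h = 0 ↔ h = hup r)) ∧
      (∀ r r' h : ℝ, 1 ≤ r → β₂ ≤ h → h ≤ hup 1 → 1 ≤ r' →
        r ≤ r' → J r h ≤ J r' h) ∧
      (∀ r h h' : ℝ, 1 ≤ r → β₂ ≤ h → h ≤ hup 1 → β₂ ≤ h' → h' ≤ hup 1 →
        h ≤ h' → J r h' ≤ J r h) ∧
      ∃ Jinf : ℝ → ℝ,
        (∀ h : ℝ, β₂ ≤ h → h ≤ 1 →
          arctan (a ⟨0, hn⟩ * h + a ⟨n - 1, Nat.sub_lt hn one_pos⟩ * Jinf h)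
              + ∑ i ∈ Finset.univ.erase (⟨0, hn⟩ : Fin n),
                  arctan (a i * h + a i * ε₀ * Jinf h)
            = θ) ∧
        (∀ h : ℝ, β₂ ≤ h → h ≤ hup 1 → Tendsto (fun r => J r h) atTop (nhds (Jinf h))) ∧
        (∃ C : ℝ, 0 < C ∧ ∀ r h : ℝ, 1 ≤ r → β₂ ≤ h → h ≤ hup 1 →
          |J r h - Jinf h| ≤ C * r ^ (-β)) ∧
        HasDerivWithinAt Jinf (-(dAeps n hn a ε₀)) (Set.Iic 1) 1 := by
  classical
  set i0 : Fin n := ⟨0, hn⟩ with hi0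
  set iN : Fin n := ⟨n - 1, Nat.sub_lt hn one_pos⟩ with hiN
  have hne : Nonempty (Fin n) := ⟨i0⟩
  set k : Fin n → ℝ := fun i => if i = i0 then a iN else a i * ε₀ with hk
  have hkpos : ∀ i, 0 < k i := by
    intro i; by_cases h : i = i0 <;> simp [hk, h]
    exacts [hapos iN, mul_pos (hapos i) hε₀]
  have haN : ∀ i, a i ≤ a iN := by
    intro i; exact hmono (by simp [Fin.le_def, hiN, Nat.le_sub_one_of_lt i.isLt])
  have ha0 : ∀ i, a i0 ≤ a i := fun i => hmono (by simp [Fin.le_def, hi0])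
  have hklb : ∀ i, a i0 * min ε₀ 1 ≤ k i := by
    intro i
    by_cases h : i = i0 <;> simp [hk, h]
    · calc a i0 * min ε₀ 1 ≤ a i0 * 1 := by
            have := (hapos i0).le; nlinarith [min_le_right ε₀ 1]
        _ ≤ a iN := by rw [mul_one]; exact ha0 iN
    · calc a i0 * min ε₀ 1 ≤ a i * ε₀ := by
            have h1 := min_le_left ε₀ 1
            have := ha0 i; have := (hapos i0).le; nlinarith
        _ = a i * ε₀ := rfl
  set G : ℝ → ℝ → ℝ := fun h j => ∑ i, arctan (a i * h + k i * j) with hG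
  have hGexp : ∀ h j : ℝ, arctan (a i0 * h + a iN * j)
      + ∑ i ∈ Finset.univ.erase i0, arctan (a i * h + a i * ε₀ * j) = G h j := by
    intro h j
    show _ = ∑ i, arctan (a i * h + k i * j)
    rw [← Finset.add_sum_erase _ _ (Finset.mem_univ i0)]
    simp only [hk, if_pos rfl]
    congr 1
    refine Finset.sum_congr rfl fun i hi => ?_
    rw [if_neg (Finset.ne_of_mem_erase hi)]
  have hGSM : ∀ h : ℝ, StrictMono (G h) := by
    intro h x y hxy
    refine Finset.sum_lt_sum_of_nonempty Finset.univ_nonempty fun i _ => ?_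
    exact arctan_strictMono (by nlinarith [hkpos i])
  have hGmonoH : ∀ j h h' : ℝ, h ≤ h' → G h j ≤ G h' j := by
    intro j h h' hh
    refine Finset.sum_le_sum fun i _ => ?_
    exact arctan_strictMono.monotone (by nlinarith [hapos i])
  set j0 : ℝ := a iN / (a i0 * min ε₀ 1) with hj0
  have hmin : 0 < min ε₀ 1 := lt_min hε₀ one_pos
  have hj0pos : 0 < j0 := div_pos (hapos iN) (mul_pos (hapos i0) hmin)
  have hkj0 : ∀ i, a i ≤ k i * j0 := by
    intro i
    calc a i ≤ a iN := haN i
    _ = (a i0 * min ε₀ 1) * j0 := by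
        rw [hj0, mul_div_cancel₀ _ (ne_of_gt (mul_pos (hapos i0) hmin))]
    _ ≤ k i * j0 := by
        have := hklb i; nlinarith
  have hGj0 : ∀ h : ℝ, 0 ≤ h → θ ≤ G h j0 := by
    intro h hh
    rw [← hθ]
    refine Finset.sum_le_sum fun i _ => ?_
    refine arctan_strictMono.monotone ?_
    have h1 := hkj0 i
    have h2 : 0 ≤ a i * h := mul_nonneg (hapos i).le hh
    linarith
  have hGcont : ∀ h : ℝ, Continuous (G h) := by
    intro h
    exact continuous_finset_sum _ fun i _ =>
      Real.continuous_arctan.comp (continuous_const.add (continuous_const.mul continuous_id))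
  have hGinj : ∀ h : ℝ, Function.Injective (G h) := fun h => (hGSM h).injective
  have hexgen : ∀ h y : ℝ, G h 0 ≤ y → y ≤ G h j0 → ∃ j, 0 ≤ j ∧ j ≤ j0 ∧ G h j = y := by
    intro h y h1 h2
    have := intermediate_value_Icc hj0pos.le (hGcont h).continuousOn
    obtain ⟨j, hj, hjy⟩ := this ⟨h1, h2⟩
    exact ⟨j, hj.1, hj.2, hjy⟩
  have hS0 : ∀ h : ℝ, G h 0 = ∑ i, arctan (a i * h) := by
    intro h; show (∑ i, arctan (a i * h + k i * 0)) = _; simp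
  have hS0mono : StrictMono (fun x : ℝ => ∑ i, arctan (a i * x)) := by
    intro x y hxy
    refine Finset.sum_lt_sum_of_nonempty Finset.univ_nonempty fun i _ => ?_
    exact arctan_strictMono (by nlinarith [hapos i])
  have hup1pos := (hhup 1 le_rfl).1
  have hup1le : hup 1 ≤ 1 := (hhup 1 le_rfl).2.1
  -- the solution function
  set J : ℝ → ℝ → ℝ := fun r h => Function.invFun (G h) (flo r) with hJ
  set Jinf : ℝ → ℝ := fun h => Function.invFun (G h) θ with hJi
  have hinvuniq : ∀ (h y j : ℝ), G h j = y → Function.invFun (G h) y = j := by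
    intro h y j hj
    rw [← hj]
    exact Function.leftInverse_invFun (hGinj h) j
  have hGlow : ∀ r h : ℝ, 1 ≤ r → β₂ ≤ h → h ≤ hup 1 → G h 0 ≤ flo r := by
    intro r h hr hb hh
    rw [hS0, ← (hhup r hr).2.2]
    refine hS0mono.monotone (le_trans hh ?_)
    exact hhmono (mem_Ici.mpr le_rfl) (mem_Ici.mpr hr) hr
  have hex : ∀ r h : ℝ, 1 ≤ r → β₂ ≤ h → h ≤ hup 1 →
      ∃ j, 0 ≤ j ∧ j ≤ j0 ∧ G h j = flo r := by
    intro r h hr hb hh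
    refine hexgen h (flo r) (hGlow r h hr hb hh) ?_
    exact le_trans (hfrange r hr).2 (hGj0 h (le_trans hβ₂pos.le hb))
  have hJeq : ∀ r h : ℝ, 1 ≤ r → β₂ ≤ h → h ≤ hup 1 → G h (J r h) = flo r := by
    intro r h hr hb hh
    obtain ⟨j, _, _, hj⟩ := hex r h hr hb hh
    exact Function.invFun_eq ⟨j, hj⟩
  have hJ0 : ∀ r h : ℝ, 1 ≤ r → β₂ ≤ h → h ≤ hup 1 → 0 ≤ J r h := by
    intro r h hr hb hh
    refine ((hGSM h).le_iff_le).mp ?_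
    rw [hJeq r h hr hb hh]
    exact hGlow r h hr hb hh
  have hJle : ∀ r h : ℝ, 1 ≤ r → β₂ ≤ h → h ≤ hup 1 → J r h ≤ j0 := by
    intro r h hr hb hh
    refine ((hGSM h).le_iff_le).mp ?_
    rw [hJeq r h hr hb hh]
    exact le_trans (hfrange r hr).2 (hGj0 h (le_trans hβ₂pos.le hb))
  -- Jinf facts
  have hexInf : ∀ h : ℝ, β₂ ≤ h → h ≤ 1 → ∃ j, 0 ≤ j ∧ j ≤ j0 ∧ G h j = θ := by
    intro h hb hh
    refine hexgen h θ ?_ (hGj0 h (le_trans hβ₂pos.le hb))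
    rw [hS0, ← hθ]
    refine Finset.sum_le_sum fun i _ => arctan_strictMono.monotone ?_
    have := hapos i; nlinarith
  have hJinfeq : ∀ h : ℝ, β₂ ≤ h → h ≤ 1 → G h (Jinf h) = θ := by
    intro h hb hh
    obtain ⟨j, _, _, hj⟩ := hexInf h hb hh
    exact Function.invFun_eq ⟨j, hj⟩
  have hJinf0 : ∀ h : ℝ, β₂ ≤ h → h ≤ 1 → 0 ≤ Jinf h := by
    intro h hb hh
    refine ((hGSM h).le_iff_le).mp ?_
    rw [hJinfeq h hb hh, hS0, ← hθ]
    refine Finset.sum_le_sum fun i _ => arctan_strictMono.monotone ?_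
    have := hapos i; nlinarith
  have hJinfle : ∀ h : ℝ, β₂ ≤ h → h ≤ 1 → Jinf h ≤ j0 := by
    intro h hb hh
    refine ((hGSM h).le_iff_le).mp ?_
    rw [hJinfeq h hb hh]
    exact hGj0 h (le_trans hβ₂pos.le hb)
  -- the gap estimate
  set B : ℝ := a iN * (1 + j0) with hB
  set c : ℝ := a iN / (1 + B ^ 2) with hc
  have hcpos : 0 < c := div_pos (hapos iN) (by positivity)
  have hgap : ∀ h j1 j2 : ℝ, 0 ≤ h → h ≤ 1 → 0 ≤ j2 → j2 ≤ j1 → j1 ≤ j0 →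
      c * (j1 - j2) ≤ G h j1 - G h j2 := by
    intro h j1 j2 hh0 hh1 hj2 hj21 hj1
    have hsum : G h j1 - G h j2
        = ∑ i, (arctan (a i * h + k i * j1) - arctan (a i * h + k i * j2)) := by
      rw [Finset.sum_sub_distrib]
    rw [hsum]
    have hterm : c * (j1 - j2)
        ≤ arctan (a i0 * h + k i0 * j1) - arctan (a i0 * h + k i0 * j2) := by
      have hx : 0 ≤ a i0 * h + k i0 * j2 := by
        have := (hapos i0).le; have := (hkpos i0).le; nlinarith
      have hxy : a i0 * h + k i0 * j2 ≤ a i0 * h + k i0 * j1 := by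
        have := (hkpos i0).le; nlinarith
      have hyB : a i0 * h + k i0 * j1 ≤ B := by
        have hki0 : k i0 = a iN := by simp [hk]
        have e1 : a i0 * h ≤ a iN * 1 := mul_le_mul (ha0 iN) hh1 hh0 (hapos iN).le
        have e2 : a iN * j1 ≤ a iN * j0 := mul_le_mul_of_nonneg_left hj1 (hapos iN).le
        have e3 : B = a iN * 1 + a iN * j0 := by rw [hB]; ring
        rw [hki0]; linarith
      have := arctan_sub_ge' hx hxy hyB
      have hki0 : k i0 = a iN := by simp [hk]
      calc c * (j1 - j2) = (a i0 * h + k i0 * j1 - (a i0 * h + k i0 * j2)) / (1 + B ^ 2) := by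
            rw [hki0, hc]; ring
      _ ≤ _ := this
    refine le_trans hterm ?_
    refine Finset.single_le_sum (f := fun i =>
      arctan (a i * h + k i * j1) - arctan (a i * h + k i * j2)) (fun i _ => ?_) (Finset.mem_univ i0)
    have h1 : k i * j2 ≤ k i * j1 := mul_le_mul_of_nonneg_left hj21 (hkpos i).le
    have h2 : a i * h + k i * j2 ≤ a i * h + k i * j1 := by linarith
    have := arctan_strictMono.monotone h2
    linarith
  -- decay constant for flo
  obtain ⟨C0, hC0⟩ := hfdecay 0 (Nat.zero_le m)
  have hfloC : ∀ r : ℝ, 1 ≤ r → |flo r - θ| ≤ C0 * r ^ (-β) := by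
    intro r hr
    have := hC0 r hr
    rw [iteratedDerivWithin_zero] at this
    simpa using this
  set C' : ℝ := (|C0| + 1) / c with hC'
  have hC'pos : 0 < C' := by positivity
  have hdecayJ : ∀ r h : ℝ, 1 ≤ r → β₂ ≤ h → h ≤ hup 1 →
      |J r h - Jinf h| ≤ C' * r ^ (-β) := by
    intro r h hr hb hh
    have hh1 : h ≤ 1 := le_trans hh hup1le
    have hJl := hJeq r h hr hb hh
    have hJi' := hJinfeq h hb hh1
    have hle : J r h ≤ Jinf h := by
      refine ((hGSM h).le_iff_le).mp ?_
      rw [hJl, hJi']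
      exact (hfrange r hr).2
    have hgap' := hgap h (Jinf h) (J r h) (le_trans hβ₂pos.le hb) hh1
      (hJ0 r h hr hb hh) hle (hJinfle h hb hh1)
    rw [hJl, hJi'] at hgap'
    have habs : |J r h - Jinf h| = Jinf h - J r h := by
      rw [abs_sub_comm]; exact abs_of_nonneg (by linarith)
    rw [habs]
    have hflo : θ - flo r ≤ C0 * r ^ (-β) := by
      have := hfloC r hr
      have h1 : θ - flo r ≤ |flo r - θ| := by
        rw [abs_sub_comm]; exact le_abs_self _
      linarith
    have hrpow : (0:ℝ) < r ^ (-β) := by positivity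
    have h2 : c * (Jinf h - J r h) ≤ C0 * r ^ (-β) := by linarith
    have h3 : C0 * r ^ (-β) ≤ (|C0| + 1) * r ^ (-β) := by
      have h4 : C0 ≤ |C0| + 1 := by have := le_abs_self C0; linarith
      exact mul_le_mul_of_nonneg_right h4 hrpow.le
    rw [hC', div_mul_eq_mul_div, le_div_iff₀ hcpos]
    calc (Jinf h - J r h) * c = c * (Jinf h - J r h) := by ring
    _ ≤ (|C0| + 1) * r ^ (-β) := by linarith
  -- ===== smooth structure: 2-variable function and inverse function theorem =====
  set P : ℝ × ℝ → ℝ := fun p => ∑ i, arctan (a i * p.1 + k i * p.2) with hP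
  have hPG : ∀ p : ℝ × ℝ, P p = G p.1 p.2 := fun p => rfl
  have hPsm : ContDiff ℝ (⊤ : ℕ∞) P := by
    refine ContDiff.sum fun i _ => ?_
    exact Real.contDiff_arctan.comp
      ((contDiff_const.mul contDiff_fst).add (contDiff_const.mul contDiff_snd))
  set fstL : ℝ × ℝ →L[ℝ] ℝ := ContinuousLinearMap.fst ℝ ℝ ℝ with hfstL
  set sndL : ℝ × ℝ →L[ℝ] ℝ := ContinuousLinearMap.snd ℝ ℝ ℝ with hsndL
  set L : ℝ × ℝ → (ℝ × ℝ →L[ℝ] ℝ) := fun p =>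
    ∑ i, (1 / (1 + (a i * p.1 + k i * p.2) ^ 2)) • (a i • fstL + k i • sndL) with hL
  set Dh : ℝ × ℝ → ℝ := fun p => ∑ i, 1 / (1 + (a i * p.1 + k i * p.2) ^ 2) * a i with hDh
  set Dj : ℝ × ℝ → ℝ := fun p => ∑ i, 1 / (1 + (a i * p.1 + k i * p.2) ^ 2) * k i with hDj
  have hLapp : ∀ p v : ℝ × ℝ, L p v = Dh p * v.1 + Dj p * v.2 := by
    intro p v
    rw [hL, hDh, hDj]
    simp only [ContinuousLinearMap.coe_sum', Finset.sum_apply,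
      ContinuousLinearMap.smul_apply, ContinuousLinearMap.add_apply,
      ContinuousLinearMap.coe_smul', Pi.smul_apply, hfstL, hsndL,
      ContinuousLinearMap.coe_fst', ContinuousLinearMap.coe_snd', smul_eq_mul]
    rw [Finset.sum_mul, Finset.sum_mul, ← Finset.sum_add_distrib]
    exact Finset.sum_congr rfl fun i _ => by ring
  have hDjpos : ∀ p : ℝ × ℝ, 0 < Dj p := by
    intro p
    rw [hDj]
    refine Finset.sum_pos (fun i _ => ?_) Finset.univ_nonempty
    have := hkpos i
    positivity
  have hPD : ∀ p : ℝ × ℝ, HasFDerivAt P (L p) p := by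
    intro p
    rw [hP, hL]
    refine HasFDerivAt.fun_sum fun i _ => ?_
    have hlin : HasFDerivAt (fun q : ℝ × ℝ => a i * q.1 + k i * q.2)
        (a i • fstL + k i • sndL) p := by
      rw [hfstL, hsndL]
      exact (hasFDerivAt_fst.const_mul (a i)).add (hasFDerivAt_snd.const_mul (k i))
    exact (Real.hasDerivAt_arctan (a i * p.1 + k i * p.2)).comp_hasFDerivAt p hlin
  set Ψ : ℝ × ℝ → ℝ × ℝ := fun q => (q.1, P q) with hΨ
  have hΨcd : ContDiff ℝ (⊤ : ℕ∞) Ψ := contDiff_fst.prodMk hPsm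
  set N : ℝ × ℝ → (ℝ × ℝ →L[ℝ] ℝ × ℝ) := fun p =>
    fstL.prod ((Dj p)⁻¹ • (sndL - Dh p • fstL)) with hN
  have hNapp : ∀ p v : ℝ × ℝ, N p v = (v.1, (Dj p)⁻¹ * (v.2 - Dh p * v.1)) := by
    intro p v
    rw [hN, hfstL, hsndL]
    simp [ContinuousLinearMap.prod_apply, ContinuousLinearMap.smul_apply,
      ContinuousLinearMap.sub_apply, smul_eq_mul]
  have hMapp : ∀ p v : ℝ × ℝ, (fstL.prod (L p)) v = (v.1, Dh p * v.1 + Dj p * v.2) := by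
    intro p v
    rw [ContinuousLinearMap.prod_apply, hLapp, hfstL]
    rfl
  have hEquiv : ∀ p : ℝ × ℝ, ∃ E : (ℝ × ℝ) ≃L[ℝ] ℝ × ℝ,
      (E : (ℝ × ℝ) →L[ℝ] ℝ × ℝ) = fstL.prod (L p) := by
    intro p
    refine ⟨ContinuousLinearEquiv.equivOfInverse (fstL.prod (L p)) (N p) ?_ ?_, rfl⟩
    · intro v
      rw [hMapp, hNapp]
      have hne' := (hDjpos p).ne'
      refine Prod.ext rfl ?_
      show (Dj p)⁻¹ * (Dh p * v.1 + Dj p * v.2 - Dh p * v.1) = v.2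
      field_simp
      ring
    · intro v
      rw [hNapp, hMapp]
      have hne' := (hDjpos p).ne'
      refine Prod.ext rfl ?_
      show Dh p * v.1 + Dj p * ((Dj p)⁻¹ * (v.2 - Dh p * v.1)) = v.2
      field_simp
      ring
  refine ⟨J, ?_, ?_, ?_, ?_, ?_, ?_, Jinf, ?_, ?_, ?_, ?_⟩
  · -- smoothness
    have hone : ((⊤ : ℕ∞) : WithTop ℕ∞) ≠ 0 := by simp
    intro p₀ hp₀
    obtain ⟨hr₀, hb₀, hh₀⟩ := hp₀
    obtain ⟨E, hE⟩ := hEquiv (p₀.2, J p₀.1 p₀.2)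
    set q₀ : ℝ × ℝ := (p₀.2, J p₀.1 p₀.2) with hq₀
    have hΨq₀ : Ψ q₀ = (p₀.2, flo p₀.1) := by
      refine Prod.ext rfl ?_
      show P q₀ = flo p₀.1
      rw [hPG]
      exact hJeq p₀.1 p₀.2 hr₀ hb₀ hh₀
    have hΨDq : HasFDerivAt Ψ (E : (ℝ × ℝ) →L[ℝ] ℝ × ℝ) q₀ := by
      rw [hE]; exact hasFDerivAt_fst.prodMk (hPD q₀)
    have hΨcdq : ContDiffAt ℝ (⊤ : ℕ∞) Ψ q₀ := hΨcd.contDiffAt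
    have hΦcd : ContDiffAt ℝ (⊤ : ℕ∞) (hΨcdq.localInverse hΨDq hone) (Ψ q₀) :=
      hΨcdq.to_localInverse hΨDq hone
    set Φ : ℝ × ℝ → ℝ × ℝ := hΨcdq.localInverse hΨDq hone with hΦdef
    have hΦright : ∀ᶠ y in 𝓝 (Ψ q₀), Ψ (Φ y) = y :=
      (hΨcdq.hasStrictFDerivAt' hΨDq hone).eventually_right_inverse
    have hΦim : Φ (Ψ q₀) = q₀ := hΨcdq.localInverse_apply_image hΨDq hone
    have hg1 : ContDiffWithinAt ℝ (⊤ : ℕ∞) (fun p : ℝ × ℝ => ((p.2, flo p.1) : ℝ × ℝ))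
        {p : ℝ × ℝ | 1 ≤ p.1 ∧ β₂ ≤ p.2 ∧ p.2 ≤ hup 1} p₀ := by
      refine ContDiffWithinAt.prodMk (contDiff_snd.contDiffAt.contDiffWithinAt) ?_
      exact (hfsm p₀.1 hr₀).comp p₀ (contDiff_fst.contDiffAt.contDiffWithinAt)
        (fun p hp => hp.1)
    have hΦ2 : ContDiffAt ℝ (⊤ : ℕ∞) (fun y : ℝ × ℝ => (Φ y).2)
        ((p₀.2, flo p₀.1) : ℝ × ℝ) := by
      rw [← hΨq₀]
      exact contDiff_snd.contDiffAt.comp _ hΦcd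
    have hcand : ContDiffWithinAt ℝ (⊤ : ℕ∞) (fun p : ℝ × ℝ => (Φ (p.2, flo p.1)).2)
        {p : ℝ × ℝ | 1 ≤ p.1 ∧ β₂ ≤ p.2 ∧ p.2 ≤ hup 1} p₀ :=
      hΦ2.comp_contDiffWithinAt (g := fun y : ℝ × ℝ => (Φ y).2) p₀ hg1
    have hpull : ∀ᶠ p in 𝓝[{p : ℝ × ℝ | 1 ≤ p.1 ∧ β₂ ≤ p.2 ∧ p.2 ≤ hup 1}] p₀,
        Ψ (Φ (p.2, flo p.1)) = ((p.2, flo p.1) : ℝ × ℝ) := by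
      have hg1c : Tendsto (fun p : ℝ × ℝ => ((p.2, flo p.1) : ℝ × ℝ))
          (𝓝[{p : ℝ × ℝ | 1 ≤ p.1 ∧ β₂ ≤ p.2 ∧ p.2 ≤ hup 1}] p₀) (𝓝 ((p₀.2, flo p₀.1) : ℝ × ℝ)) :=
        hg1.continuousWithinAt
      rw [hΨq₀] at hΦright
      exact hg1c.eventually hΦright
    have heva : (fun p : ℝ × ℝ => J p.1 p.2)
        =ᶠ[𝓝[{p : ℝ × ℝ | 1 ≤ p.1 ∧ β₂ ≤ p.2 ∧ p.2 ≤ hup 1}] p₀]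
        (fun p : ℝ × ℝ => (Φ (p.2, flo p.1)).2) := by
      filter_upwards [hpull, self_mem_nhdsWithin] with p hp hpS
      have h2 : P (Φ (p.2, flo p.1)) = flo p.1 := congrArg Prod.snd hp
      have h1 : (Φ (p.2, flo p.1)).1 = p.2 := congrArg Prod.fst hp
      rw [hPG, h1] at h2
      exact hinvuniq p.2 (flo p.1) _ h2
    have hat : J p₀.1 p₀.2 = (Φ ((p₀.2, flo p₀.1) : ℝ × ℝ)).2 := by
      rw [← hΨq₀, hΦim]
    exact hcand.congr_of_eventuallyEq heva hat
  · -- existence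
    intro r h hr hb hh
    exact ⟨hJ0 r h hr hb hh, by rw [hGexp]; exact hJeq r h hr hb hh⟩
  · -- uniqueness
    intro J' hJ' r h hr hb hh
    have h1 := (hJ' r h hr hb hh).2
    rw [hGexp] at h1
    have h2 := hJeq r h hr hb hh
    exact hGinj h (by rw [h1, h2])
  · -- zero iff
    intro r h hr hb hh
    constructor
    · intro h0
      have h1 := hJeq r h hr hb hh
      rw [h0, hS0] at h1
      have h2 := (hhup r hr).2.2
      exact hS0mono.injective (by rw [h1, h2])
    · intro h0
      subst h0
      refine hinvuniq _ _ _ ?_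
      rw [hS0]
      exact (hhup r hr).2.2
  · -- mono in r
    intro r r' h hr hb hh hr' hrr'
    refine ((hGSM h).le_iff_le).mp ?_
    rw [hJeq r h hr hb hh, hJeq r' h hr' hb hh]
    exact hfmono (mem_Ici.mpr hr) (mem_Ici.mpr hr') hrr'
  · -- anti in h
    intro r h h' hr hb hh hb' hh' hhh'
    refine ((hGSM h').le_iff_le).mp ?_
    rw [hJeq r h' hr hb' hh']
    rw [← hJeq r h hr hb hh]
    exact hGmonoH _ _ _ hhh'
  · -- Jinf equation
    intro h hb hh
    rw [hGexp]
    exact hJinfeq h hb hh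
  · -- tendsto
    intro h hb hh
    rw [← tendsto_sub_nhds_zero_iff]
    refine squeeze_zero_norm' (a := fun r : ℝ => C' * r ^ (-β)) ?_ ?_
    · filter_upwards [eventually_ge_atTop (1:ℝ)] with r hr
      simpa using hdecayJ r h hr hb hh
    · have := (tendsto_rpow_neg_atTop (by linarith : (0:ℝ) < β)).const_mul C'
      simpa using this
  · -- decay
    exact ⟨C', hC'pos, hdecayJ⟩
  · -- derivative at infinity
    have hone : ((⊤ : ℕ∞) : WithTop ℕ∞) ≠ 0 := by simp
    obtain ⟨E, hE⟩ := hEquiv ((1 : ℝ), (0 : ℝ))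
    have hG10 : G 1 0 = θ := by
      rw [hS0, ← hθ]
      exact Finset.sum_congr rfl fun i _ => by rw [mul_one]
    have hq₁ : Ψ ((1:ℝ), (0:ℝ)) = ((1:ℝ), θ) := by
      refine Prod.ext rfl ?_
      show P ((1:ℝ), (0:ℝ)) = θ
      rw [hPG]
      exact hG10
    have hΨDq : HasFDerivAt Ψ (E : (ℝ × ℝ) →L[ℝ] ℝ × ℝ) ((1:ℝ), (0:ℝ)) := by
      rw [hE]; exact hasFDerivAt_fst.prodMk (hPD _)
    have hΨcdq : ContDiffAt ℝ (⊤ : ℕ∞) Ψ ((1:ℝ), (0:ℝ)) := hΨcd.contDiffAt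
    have hΦcd : ContDiffAt ℝ (⊤ : ℕ∞) (hΨcdq.localInverse hΨDq hone)
        (Ψ ((1:ℝ), (0:ℝ))) := hΨcdq.to_localInverse hΨDq hone
    set Φ : ℝ × ℝ → ℝ × ℝ := hΨcdq.localInverse hΨDq hone with hΦdef
    have hΦright : ∀ᶠ y in 𝓝 (Ψ ((1:ℝ), (0:ℝ))), Ψ (Φ y) = y :=
      (hΨcdq.hasStrictFDerivAt' hΨDq hone).eventually_right_inverse
    have hΦim : Φ (Ψ ((1:ℝ), (0:ℝ))) = ((1:ℝ), (0:ℝ)) :=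
      hΨcdq.localInverse_apply_image hΨDq hone
    set ψ : ℝ → ℝ := fun h => (Φ (h, θ)).2 with hψdef
    have hψ1 : ψ 1 = 0 := by
      show (Φ ((1:ℝ), θ)).2 = 0
      rw [← hq₁, hΦim]
    have hψcd : ContDiffAt ℝ (⊤ : ℕ∞) ψ 1 := by
      have h1 : ContDiffAt ℝ (⊤ : ℕ∞) (fun h : ℝ => ((h, θ) : ℝ × ℝ)) 1 :=
        (contDiff_id.prodMk contDiff_const).contDiffAt
      have h2 : ContDiffAt ℝ (⊤ : ℕ∞) (fun y : ℝ × ℝ => (Φ y).2) ((1:ℝ), θ) := by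
        rw [← hq₁]
        exact contDiff_snd.contDiffAt.comp _ hΦcd
      exact h2.comp (g := fun y : ℝ × ℝ => (Φ y).2) 1 h1
    have hev : ∀ᶠ h in 𝓝 (1:ℝ), Ψ (Φ (h, θ)) = ((h, θ) : ℝ × ℝ) := by
      have hcont : Tendsto (fun h : ℝ => ((h, θ) : ℝ × ℝ)) (𝓝 1) (𝓝 ((1:ℝ), θ)) :=
        (continuous_id.prodMk continuous_const).continuousAt
      rw [hq₁] at hΦright
      exact hcont.eventually hΦright
    have hevG : ∀ᶠ h in 𝓝 (1:ℝ), G h (ψ h) = θ := by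
      filter_upwards [hev] with h hp
      have h2 : P (Φ (h, θ)) = θ := congrArg Prod.snd hp
      have h1 : (Φ (h, θ)).1 = h := congrArg Prod.fst hp
      rw [hPG, h1] at h2
      exact h2
    have hψd : DifferentiableAt ℝ ψ 1 := hψcd.differentiableAt hone
    set d : ℝ := deriv ψ 1 with hd
    have hder : HasDerivAt ψ d 1 := hψd.hasDerivAt
    have hcomp : HasDerivAt (fun h : ℝ => P (h, ψ h)) ((L ((1:ℝ), ψ 1)) (((1:ℝ), d) : ℝ × ℝ)) 1 := by
      have hcurve : HasDerivAt (fun h : ℝ => ((h, ψ h) : ℝ × ℝ)) (((1:ℝ), d) : ℝ × ℝ) 1 :=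
        (hasDerivAt_id 1).prodMk hder
      exact (hPD ((1:ℝ), ψ 1)).comp_hasDerivAt 1 hcurve
    have hconst : HasDerivAt (fun h : ℝ => P (h, ψ h)) 0 1 := by
      refine (hasDerivAt_const (1:ℝ) θ).congr_of_eventuallyEq ?_
      filter_upwards [hevG] with h hh
      show P (h, ψ h) = θ
      rw [hPG]; exact hh
    have hzero : (L ((1:ℝ), ψ 1)) (((1:ℝ), d) : ℝ × ℝ) = 0 := hcomp.unique hconst
    rw [hLapp, hψ1] at hzero
    have hzero' : Dh ((1:ℝ), (0:ℝ)) + Dj ((1:ℝ), (0:ℝ)) * d = 0 := by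
      simpa using hzero
    have hDh1 : Dh ((1:ℝ), (0:ℝ)) = ∑ i, a i / (1 + a i ^ 2) := by
      rw [hDh]
      refine Finset.sum_congr rfl fun i _ => ?_
      rw [mul_one, mul_zero, add_zero, one_div, ← div_eq_inv_mul]
    have hDj1 : Dj ((1:ℝ), (0:ℝ)) = a iN / (1 + a i0 ^ 2)
        + ε₀ * ∑ i ∈ Finset.univ.erase i0, a i / (1 + a i ^ 2) := by
      rw [hDj]
      show (∑ i, 1 / (1 + (a i * 1 + k i * 0) ^ 2) * k i) = _
      rw [← Finset.add_sum_erase _ _ (Finset.mem_univ i0)]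
      congr 1
      · rw [mul_one, mul_zero, add_zero]
        have : k i0 = a iN := by simp [hk]
        rw [this, one_div, ← div_eq_inv_mul]
      · rw [Finset.mul_sum]
        refine Finset.sum_congr rfl fun i hi => ?_
        have : k i = a i * ε₀ := by simp [hk, Finset.ne_of_mem_erase hi]
        rw [mul_one, mul_zero, add_zero, this]
        field_simp
    have hXeq : dAeps n hn a ε₀ = (Dj ((1:ℝ), (0:ℝ)))⁻¹ * Dh ((1:ℝ), (0:ℝ)) := by
      rw [hDh1, hDj1]
      rfl
    have hDjne : Dj ((1:ℝ), (0:ℝ)) ≠ 0 := (hDjpos _).ne'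
    have hd' : d = -(dAeps n hn a ε₀) := by
      rw [hXeq]
      field_simp
      linarith
    have hJinfψ : Jinf =ᶠ[𝓝[Set.Iic 1] (1:ℝ)] ψ := by
      filter_upwards [mem_nhdsWithin_of_mem_nhds hevG] with h hh
      exact hinvuniq h θ (ψ h) hh
    have hJinf1 : Jinf 1 = ψ 1 := by
      rw [hψ1]
      exact hinvuniq 1 θ 0 hG10
    have hfinal : HasDerivWithinAt Jinf d (Set.Iic 1) 1 :=
      (hder.hasDerivWithinAt).congr_of_eventuallyEq hJinfψ hJinf1
    rw [hd'] at hfinal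
    exact hfinal
end
end
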